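/- arXiv:0908.3438 — 4 statements merged into one kernel-verified Lean document; each statement's English description precedes it below -/
import Mathlib

section
/- Let D be the 2^{2n} × (2n+2) two-level design obtained as the binary image of the quaternary code generated by G = (v, I_n), where v ∈ Z_4^n has f_i occurrences of i for i=0,1,2,3. Set k_1 = f_1 + 2f_2 + f_3 + 1, k_2 = 2f_1 + 2f_3 + 2, and ρ = 2^{−⌊(f_1+f_3)/2⌋}. Then D has exactly one complete word of length k_2 (a set of k_2 columns with aliasing index 1) and exactly 2/ρ² partial words of length k_1 with aliasing index ρ; all other subsets of columns have aliasing index 0. -/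
open Finset

/-- The Gray map `φ : Z₄ → {−1,1}²`: φ(0)=(1,1), φ(1)=(1,−1), φ(2)=(−1,−1), φ(3)=(−1,1). -/
def gray (x : ZMod 4) : Fin 2 → ℤ := fun c =>
  if c = 0 then (if x = 0 ∨ x = 1 then 1 else -1)
  else (if x = 0 ∨ x = 3 then 1 else -1)

/-- The `2^{2n} × (2n+2)` two-level design which is the Gray-map image of the quaternary
code generated by `G = (v, Iₙ)`.  Rows are indexed by `u : Fin n → ZMod 4`; the codeword is
`(∑ uᵢvᵢ, u₁, …, uₙ)` and each `Z₄`-coordinate gives two ±1 columns via the Gray map. -/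
def Dv {n : ℕ} (v : Fin n → ZMod 4) :
    (Fin n → ZMod 4) → (Fin (n + 1) × Fin 2) → ℤ :=
  fun u p => gray ((Fin.cons (∑ i, u i * v i) u : Fin (n + 1) → ZMod 4) p.1) p.2

/-- The J-characteristic `j(s; D) = ∑ᵢ ∏_{c ∈ s} D i c`. -/
def Jchar {I J : Type*} [Fintype I] (D : I → J → ℤ) (s : Finset J) : ℤ :=
  ∑ i, ∏ c ∈ s, D i c

/-- The aliasing index `ρ(s; D) = |j(s; D)| / N`. -/
def rho {I J : Type*} [Fintype I] (D : I → J → ℤ) (s : Finset J) : ℚ :=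
  |(Jchar D s : ℚ)| / (Fintype.card I : ℚ)

/-- `freq v z` = number of occurrences of `z ∈ Z₄` in the vector `v`. -/
def freq {n : ℕ} (v : Fin n → ZMod 4) (z : ZMod 4) : ℕ :=
  (Finset.univ.filter fun i => v i = z).card

/-- A design has projectivity (at least) `p` if every projection onto `p` columns contains a
complete `2^p` factorial. -/
def hasProjectivity {I J : Type*} (D : I → J → ℤ) (p : ℕ) : Prop :=
  ∀ s : Finset J, s.card = p → ∀ ε : J → ℤ, (∀ c, ε c = 1 ∨ ε c = -1) →
    ∃ i, ∀ c ∈ s, D i c = ε c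

/-- `hasResolution D R` : the generalized resolution of `D` equals `R`, i.e.
`R = r + 1 − max_{|s| = r} ρ(s; D)` where `r` is the smallest size of a (nonempty) column
subset with positive aliasing index. -/
def hasResolution {I J : Type*} [Fintype I] (D : I → J → ℤ) (R : ℚ) : Prop :=
  ∃ (r : ℕ) (m : ℚ),
    (∃ s : Finset J, s.card = r ∧ 0 < rho D s) ∧
    (∀ s : Finset J, s.Nonempty → s.card < r → rho D s = 0) ∧
    (∃ s : Finset J, s.card = r ∧ rho D s = m) ∧
    (∀ s : Finset J, s.card = r → rho D s ≤ m) ∧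
    R = (r : ℚ) + 1 - m

/-- The generalized wordlength pattern `A_k(D) = ∑_{|s| = k} ρ(s; D)²`. -/
def Apattern {I J : Type*} [Fintype I] [Fintype J] (D : I → J → ℤ) (k : ℕ) : ℚ :=
  ∑ s ∈ Finset.powersetCard k Finset.univ, (rho D s) ^ 2

/-- The half-fraction of `D` obtained by keeping the rows where the branching column `b`
equals `+1` and deleting column `b`. -/
def halfFraction {I J : Type*} (D : I → J → ℤ) (b : J) :
    {i : I // D i b = 1} → {c : J // c ≠ b} → ℤ :=
  fun i c => D i.1 c.1

/-- Sequential (lexicographic) comparison of generalized wordlength patterns: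
`D` has no more aberration than `D'`. -/
def wlpLe {I I' J : Type*} [Fintype I] [Fintype I'] [Fintype J]
    (D : I → J → ℤ) (D' : I' → J → ℤ) : Prop :=
  ∀ k : ℕ, (∀ j < k, Apattern D j = Apattern D' j) → Apattern D k ≤ Apattern D' k

/-! Expanding the Gray products `∏_{c ∈ T} φ(x)_c` in the characters `x ↦ i^(a x)` of `ℤ/4` and
summing over the code turns the J-characteristic of a set of columns into a sum over the dual
code, which is generated by `w = (-1, v)`: if `s` has fibre `T j ⊆ {0, 1}` over coordinate `j`,
then `4 j(s) = ∑_a ∏_j B(a w_j, T j)`, with `B` the Fourier transform of the Gray products.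
`B(w, ∅)` vanishes unless `w = 0`, `B(w, {0, 1})` unless `w = 2`, and `B(w, {c})` unless `w` is
odd, where it is `2(1 ± i)`. Hence a nonzero term with `a = 2` forces the complete word, and a
nonzero term with odd `a` forces a singleton fibre over each odd `w_j` (`f₁ + f₃ + 1` of them),
the fibres over even `w_j` being determined. For such a word the terms `a = 1, 3` are conjugate,
so `2 j(s)` is a power of two times `Re((1+i)^x (1-i)^y)`, `x + y = f₁ + f₃ + 1`; this is
`±2^⌊(x+y)/2⌋` when `x + y` is odd and, when `x + y` is even, either that or `0` according to the
parity of `x`, which leaves exactly `2 · 4^⌊(f₁+f₃)/2⌋` partial words. -/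

local notation "ℤ[i]" => GaussianInt

def quarterChar : AddChar (ZMod 4) ℤ[i] where
  toFun x := ⟨0, 1⟩ ^ x.val
  map_zero_eq_one' := rfl
  map_add_eq_mul' := by decide

lemma quarterChar_sum {ι : Type*} (s : Finset ι) (f : ι → ZMod 4) :
    quarterChar (∑ i ∈ s, f i) = ∏ i ∈ s, quarterChar (f i) := by
  induction s using Finset.cons_induction with
  | empty => simp
  | cons i s hi ih => rw [sum_cons, prod_cons, AddChar.map_add_eq_mul, ih]

lemma quarterChar_natCast (k : ℕ) : quarterChar k = quarterChar 1 ^ k := by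
  rw [← AddChar.map_nsmul_eq_pow, nsmul_one]

lemma sum_zmod_four {M : Type*} [AddCommMonoid M] (f : ZMod 4 → M) :
    ∑ a, f a = f 0 + f 1 + f 2 + f 3 :=
  Fin.sum_univ_four f

lemma zmod_four_cases : ∀ a : ZMod 4, a = 0 ∨ a = 2 ∨ a = 1 ∨ a = 3 := by decide

def grayProd (T : Finset (Fin 2)) (x : ZMod 4) : ℤ := ∏ c ∈ T, gray x c

def grayCoeff (w : ZMod 4) (T : Finset (Fin 2)) : ℤ[i] :=
  ∑ x, quarterChar (w * x) * grayProd T x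

lemma four_mul_grayProd : ∀ T x,
    4 * (grayProd T x : ℤ[i]) = ∑ a, grayCoeff (-a) T * quarterChar (a * x) := by
  decide

lemma grayCoeff_neg : ∀ w T, grayCoeff (-w) T = star (grayCoeff w T) := by decide

def completeShape (w : ZMod 4) : Finset (Fin 2) := if w = 1 ∨ w = 3 then univ else ∅

/-- For odd `w` the flag selects the singleton on which `grayCoeff w` is `2(1+i)` (`true`) or
`2(1-i)` (`false`); for even `w` it is ignored. -/
def partialShape (w : ZMod 4) (b : Bool) : Finset (Fin 2) :=
  if w = 0 then ∅ else if w = 2 then univ else if (w = 1) = b then {0} else {1}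

lemma grayCoeff_zero_ne_zero : ∀ T, grayCoeff 0 T ≠ 0 → T = ∅ := by decide

lemma grayCoeff_two_mul_ne_zero : ∀ w T, grayCoeff (2 * w) T ≠ 0 → T = completeShape w := by
  decide

lemma grayCoeff_odd_mul_ne_zero : ∀ a w T, (a = 1 ∨ a = 3) → grayCoeff (a * w) T ≠ 0 →
    T = partialShape w ((w = 1 ∨ w = 3) ∧ T = partialShape w true) := by
  decide

lemma grayCoeff_two_mul_completeShape : ∀ w, grayCoeff (2 * w) (completeShape w) = 4 := by decide

lemma grayCoeff_mul_completeShape_of_ne_two : ∀ a w, (w = 1 ∨ w = 3) → a ≠ 2 →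
    grayCoeff (a * w) (completeShape w) = 0 := by
  decide

lemma grayCoeff_partialShape : ∀ w b, grayCoeff w (partialShape w b) =
    if w = 1 ∨ w = 3 then 2 * (if b then ⟨1, 1⟩ else ⟨1, -1⟩) else 4 := by
  decide

lemma grayCoeff_even_mul_partialShape : ∀ a w b, (a = 0 ∨ a = 2) → (w = 1 ∨ w = 3) →
    grayCoeff (a * w) (partialShape w b) = 0 := by
  decide

lemma partialShape_injective_of_odd : ∀ w, (w = 1 ∨ w = 3) → ∀ b b',
    partialShape w b = partialShape w b' → b = b' := by
  decide

lemma card_partialShape : ∀ w b, #(partialShape w b) = #(partialShape w true) := by decide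

lemma completeShape_ne_partialShape_neg_one : ∀ b, completeShape (-1) ≠ partialShape (-1) b := by
  decide

lemma one_add_pow_mul_one_sub_pow (x y : ℕ) :
    (⟨1, 1⟩ : ℤ[i]) ^ x * ⟨1, -1⟩ ^ y
      = 2 ^ ((x + y) / 2) * quarterChar ((x + y) / 2 + 3 * y : ℕ) * ⟨1, 1⟩ ^ ((x + y) % 2) := by
  have hsub : (⟨1, -1⟩ : ℤ[i]) = quarterChar 1 ^ 3 * ⟨1, 1⟩ := by decide
  have hsq : (⟨1, 1⟩ : ℤ[i]) ^ 2 = 2 * quarterChar 1 := by decide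
  have h : (⟨1, 1⟩ : ℤ[i]) ^ x * ⟨1, -1⟩ ^ y
      = ⟨1, 1⟩ ^ (2 * ((x + y) / 2) + (x + y) % 2) * quarterChar 1 ^ (3 * y) := by
    rw [Nat.div_add_mod, hsub]; ring
  rw [h, pow_add, pow_mul, hsq, quarterChar_natCast]
  ring

lemma re_quarterChar_mul_ne_zero_iff :
    ∀ t : ZMod 4, ∀ r < 2, (quarterChar t * ⟨1, 1⟩ ^ r).re ≠ 0 ↔ r = 1 ∨ t.val % 2 = 0 := by
  decide

lemma abs_re_quarterChar_mul : ∀ t : ZMod 4, ∀ r < 2,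
    (quarterChar t * ⟨1, 1⟩ ^ r).re ≠ 0 → |(quarterChar t * ⟨1, 1⟩ ^ r).re| = 1 := by
  decide

lemma re_one_add_pow_mul_one_sub_pow (x y : ℕ) :
    ((⟨1, 1⟩ : ℤ[i]) ^ x * ⟨1, -1⟩ ^ y).re
      = 2 ^ ((x + y) / 2)
        * (quarterChar ((x + y) / 2 + 3 * y : ℕ) * ⟨1, 1⟩ ^ ((x + y) % 2)).re := by
  rw [one_add_pow_mul_one_sub_pow, mul_assoc, ← Zsqrtd.re_smul]
  push_cast
  rfl

lemma re_one_add_pow_mul_one_sub_pow_ne_zero_iff (x y : ℕ) :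
    ((⟨1, 1⟩ : ℤ[i]) ^ x * ⟨1, -1⟩ ^ y).re ≠ 0 ↔ (x + y) % 2 = 1 ∨ ((x + y) / 2 + y) % 2 = 0 := by
  rw [re_one_add_pow_mul_one_sub_pow, mul_ne_zero_iff_left (by positivity),
    re_quarterChar_mul_ne_zero_iff _ _ (Nat.mod_lt _ two_pos), ZMod.val_natCast]
  omega

lemma abs_re_one_add_pow_mul_one_sub_pow {x y : ℕ}
    (h : ((⟨1, 1⟩ : ℤ[i]) ^ x * ⟨1, -1⟩ ^ y).re ≠ 0) :
    |((⟨1, 1⟩ : ℤ[i]) ^ x * ⟨1, -1⟩ ^ y).re| = 2 ^ ((x + y) / 2) := by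
  rw [re_one_add_pow_mul_one_sub_pow] at h ⊢
  rw [abs_mul, abs_re_quarterChar_mul _ _ (Nat.mod_lt _ two_pos) (right_ne_zero_of_mul h)]
  simp

lemma card_powerset_filter_card_mod_two {α : Type*} [DecidableEq α] {P : Finset α}
    (hP : P.Nonempty) {r : ℕ} (hr : r < 2) :
    #(P.powerset.filter fun X => #X % 2 = r) = 2 ^ (#P - 1) := by
  set e := #(P.powerset.filter fun X => #X % 2 = 0)
  set o := #(P.powerset.filter fun X => ¬#X % 2 = 0)
  have htotal : e + o = 2 ^ #P := by
    rw [card_filter_add_card_filter_not, card_powerset]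
  have hbalance : (e : ℤ) - o = 0 := by
    rw [← sum_powerset_neg_one_pow_card_of_nonempty hP, ← sum_filter_add_sum_filter_not _
      (fun X => #X % 2 = 0)]
    have heven : ∀ X ∈ P.powerset.filter (fun X => #X % 2 = 0), (-1 : ℤ) ^ #X = 1 := by
      intro X hX
      rw [neg_one_pow_eq_pow_mod_two, (mem_filter.mp hX).2, pow_zero]
    have hodd : ∀ X ∈ P.powerset.filter (fun X => ¬#X % 2 = 0), (-1 : ℤ) ^ #X = -1 := by
      intro X hX
      rw [neg_one_pow_eq_pow_mod_two, Nat.mod_two_ne_zero.mp (mem_filter.mp hX).2, pow_one]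
    rw [sum_congr rfl heven, sum_congr rfl hodd]
    simp [e, o, sub_eq_add_neg]
  have hpow : 2 ^ #P = 2 * 2 ^ (#P - 1) := by
    rw [← pow_succ', Nat.sub_add_cancel hP.card_pos]
  interval_cases r
  · omega
  · rw [filter_congr fun X _ => (Nat.mod_two_ne_zero (n := #X)).symm]
    change o = _
    omega

lemma card_powerset_filter_re_ne_zero {α : Type*} [DecidableEq α] {P : Finset α}
    (hP : P.Nonempty) :
    #(P.powerset.filter fun X => ((⟨1, 1⟩ : ℤ[i]) ^ #X * ⟨1, -1⟩ ^ (#P - #X)).re ≠ 0)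
      = 2 * 4 ^ ((#P - 1) / 2) := by
  have hsub {X : Finset α} (hX : X ∈ P.powerset) : #X ≤ #P := card_le_card (mem_powerset.mp hX)
  rcases Nat.even_or_odd' #P with ⟨k, hk | hk⟩
  · have hk0 : k ≠ 0 := by rintro rfl; simp [hP.ne_empty] at hk
    rw [filter_congr fun X hX => (re_one_add_pow_mul_one_sub_pow_ne_zero_iff _ _).trans
      (show _ ↔ #X % 2 = k % 2 by have := hsub hX; omega),
      card_powerset_filter_card_mod_two hP (Nat.mod_lt _ two_pos), hk,
      show (2 * k - 1) / 2 = k - 1 by omega, show 2 * k - 1 = 2 * (k - 1) + 1 by omega,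
      pow_succ, pow_mul]
    norm_num
    ring
  · rw [filter_true_of_mem fun X hX => (re_one_add_pow_mul_one_sub_pow_ne_zero_iff _ _).mpr
      (Or.inl (by have := hsub hX; omega)), card_powerset, hk,
      show (2 * k + 1 - 1) / 2 = k by omega, pow_succ, pow_mul]
    norm_num
    ring

section Columns
variable {N : ℕ}

def columns (T : Fin N → Finset (Fin 2)) : Finset (Fin N × Fin 2) :=
  univ.filter fun p => p.2 ∈ T p.1

def fibers (s : Finset (Fin N × Fin 2)) (j : Fin N) : Finset (Fin 2) :=
  univ.filter fun c => (j, c) ∈ s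

@[simp] lemma mem_columns {T : Fin N → Finset (Fin 2)} {p : Fin N × Fin 2} :
    p ∈ columns T ↔ p.2 ∈ T p.1 := by
  simp [columns]

lemma columns_fibers (s : Finset (Fin N × Fin 2)) : columns (fibers s) = s := by
  ext p; simp [fibers]

lemma columns_injective : Function.Injective (columns (N := N)) := by
  intro T T' h
  funext j; ext c
  simpa using congr(((j, c) ∈ $h))

lemma card_columns (T : Fin N → Finset (Fin 2)) : #(columns T) = ∑ j, #(T j) := by
  rw [columns, card_filter, Fintype.sum_prod_type]
  simp

lemma prod_columns {M : Type*} [CommMonoid M] (T : Fin N → Finset (Fin 2))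
    (f : Fin N × Fin 2 → M) :
    ∏ p ∈ columns T, f p = ∏ j, ∏ c ∈ T j, f (j, c) := by
  rw [columns, prod_filter, Fintype.prod_prod_type]
  simp [prod_ite_mem]

end Columns

section DualSum
variable {N : ℕ} (w : Fin N → ZMod 4)

def dualSum (T : Fin N → Finset (Fin 2)) : ℤ[i] := ∑ a, ∏ j, grayCoeff (a * w j) (T j)

def oddSupport : Finset (Fin N) := univ.filter fun j => w j = 1 ∨ w j = 3

def completeFibers (j : Fin N) : Finset (Fin 2) := completeShape (w j)

def partialFibers (X : Finset (Fin N)) (j : Fin N) : Finset (Fin 2) := partialShape (w j) (j ∈ X)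

lemma dualSum_completeFibers {j₀ : Fin N} (hj₀ : w j₀ = 1 ∨ w j₀ = 3) :
    dualSum w (completeFibers w) = 4 ^ N := by
  rw [dualSum, sum_eq_single 2]
  · simp [completeFibers, grayCoeff_two_mul_completeShape]
  · exact fun a _ ha =>
      prod_eq_zero (mem_univ j₀) (grayCoeff_mul_completeShape_of_ne_two a _ hj₀ ha)
  · simp

lemma dualSum_partialFibers {j₀ : Fin N} (hj₀ : w j₀ = 1 ∨ w j₀ = 3) (X : Finset (Fin N)) :
    dualSum w (partialFibers w X) = (∏ j, grayCoeff (w j) (partialFibers w X j))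
      + star (∏ j, grayCoeff (w j) (partialFibers w X j)) := by
  have hvanish (a : ZMod 4) (ha : a = 0 ∨ a = 2) :
      ∏ j, grayCoeff (a * w j) (partialFibers w X j) = 0 :=
    prod_eq_zero (mem_univ j₀) (grayCoeff_even_mul_partialShape a _ _ ha hj₀)
  rw [dualSum, sum_zmod_four, hvanish 0 (by simp), hvanish 2 (by simp), star_prod]
  simp only [zero_add, add_zero]
  congr 1
  · simp
  · refine prod_congr rfl fun j _ => ?_
    rw [show (3 : ZMod 4) = -1 from rfl, neg_one_mul, grayCoeff_neg]

lemma prod_grayCoeff_partialFibers {X : Finset (Fin N)} (hX : X ⊆ oddSupport w) :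
    ∏ j, grayCoeff (w j) (partialFibers w X j)
      = 4 ^ (N - #(oddSupport w)) * 2 ^ #(oddSupport w)
        * (⟨1, 1⟩ ^ #X * ⟨1, -1⟩ ^ (#(oddSupport w) - #X)) := by
  have hin : (oddSupport w).filter (fun j => j ∈ X) = X := by
    rw [filter_mem_eq_inter, inter_eq_right.mpr hX]
  have hout : #((oddSupport w).filter (fun j => j ∉ X)) = #(oddSupport w) - #X := by
    rw [filter_notMem_eq_sdiff, card_sdiff_of_subset hX]
  have heven : #(univ.filter fun j => ¬(w j = 1 ∨ w j = 3)) = N - #(oddSupport w) := by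
    rw [filter_not, card_sdiff_of_subset (subset_univ _), card_univ, Fintype.card_fin]
    rfl
  simp only [partialFibers, grayCoeff_partialShape]
  rw [prod_ite, prod_const, prod_mul_distrib, prod_const, prod_ite, prod_const, prod_const]
  simp only [decide_eq_true_eq]
  rw [show (univ.filter fun j => w j = 1 ∨ w j = 3) = oddSupport w from rfl, hin, hout, heven]
  ring

lemma re_dualSum_partialFibers {j₀ : Fin N} (hj₀ : w j₀ = 1 ∨ w j₀ = 3)
    {X : Finset (Fin N)} (hX : X ⊆ oddSupport w) :
    (dualSum w (partialFibers w X)).re = 2 * (4 ^ (N - #(oddSupport w)) * 2 ^ #(oddSupport w)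
      * ((⟨1, 1⟩ : ℤ[i]) ^ #X * ⟨1, -1⟩ ^ (#(oddSupport w) - #X)).re) := by
  rw [dualSum_partialFibers w hj₀, Zsqrtd.re_add, Zsqrtd.re_star,
    prod_grayCoeff_partialFibers w hX, show (4 : ℤ[i]) ^ (N - #(oddSupport w)) * 2 ^ #(oddSupport w)
      = ((4 ^ (N - #(oddSupport w)) * 2 ^ #(oddSupport w) : ℤ) : ℤ[i]) by norm_cast,
    Zsqrtd.re_smul]
  ring

lemma eq_of_dualSum_ne_zero {T : Fin N → Finset (Fin 2)} (h : dualSum w T ≠ 0) :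
    (∀ j, T j = ∅) ∨ T = completeFibers w ∨ ∃ X ⊆ oddSupport w, T = partialFibers w X := by
  obtain ⟨a, -, ha⟩ := exists_ne_zero_of_sum_ne_zero h
  have hT (j : Fin N) : grayCoeff (a * w j) (T j) ≠ 0 := prod_ne_zero_iff.mp ha j (mem_univ j)
  rcases zmod_four_cases a with rfl | rfl | ha
  · exact Or.inl fun j => grayCoeff_zero_ne_zero _ (by simpa using hT j)
  · exact Or.inr <| Or.inl <| funext fun j => grayCoeff_two_mul_ne_zero _ _ (hT j)
  refine Or.inr <| Or.inr
    ⟨univ.filter fun j => (w j = 1 ∨ w j = 3) ∧ T j = partialShape (w j) true,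
    fun j hj => mem_filter.mpr ⟨mem_univ j, (mem_filter.mp hj).2.1⟩, funext fun j => ?_⟩
  convert grayCoeff_odd_mul_ne_zero a (w j) (T j) ha (hT j) using 2
  simp [partialFibers]

end DualSum

section Design
variable {n : ℕ} (v : Fin n → ZMod 4)

/-- The dual of the code generated by `(v, Iₙ)` is generated by `(-1, v)`. -/
def dualGen : Fin (n + 1) → ZMod 4 := Fin.cons (-1) v

def completeWord : Finset (Fin (n + 1) × Fin 2) := columns (completeFibers (dualGen v))

def partialWord (X : Finset (Fin (n + 1))) : Finset (Fin (n + 1) × Fin 2) :=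
  columns (partialFibers (dualGen v) X)

lemma dualGen_zero : dualGen v 0 = 1 ∨ dualGen v 0 = 3 := Or.inr rfl

lemma zero_mem_oddSupport_dualGen : 0 ∈ oddSupport (dualGen v) :=
  mem_filter.mpr ⟨mem_univ _, dualGen_zero v⟩

theorem four_mul_Jchar_columns (T : Fin (n + 1) → Finset (Fin 2)) :
    4 * (Jchar (Dv v) (columns T) : ℤ[i]) = dualSum (dualGen v) T := by
  have row (u : Fin n → ZMod 4) : ∏ p ∈ columns T, Dv v u p
      = grayProd (T 0) (∑ i, u i * v i) * ∏ i, grayProd (T i.succ) (u i) := by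
    simp [Dv, prod_columns, Fin.prod_univ_succ, grayProd]
  have expand (u : Fin n → ZMod 4) : 4 * (grayProd (T 0) (∑ i, u i * v i) : ℤ[i])
      * ∏ i, (grayProd (T i.succ) (u i) : ℤ[i])
      = ∑ a, grayCoeff (-a) (T 0)
          * ∏ i, quarterChar (a * v i * u i) * grayProd (T i.succ) (u i) := by
    rw [four_mul_grayProd, sum_mul]
    refine sum_congr rfl fun a _ => ?_
    have : a * ∑ i, u i * v i = ∑ i, a * v i * u i := by
      rw [mul_sum]; exact sum_congr rfl fun i _ => by ring
    rw [this, quarterChar_sum, mul_assoc, ← prod_mul_distrib]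
  have factor (a : ZMod 4) :
      ∑ u : Fin n → ZMod 4, ∏ i, quarterChar (a * v i * u i) * grayProd (T i.succ) (u i)
        = ∏ i, grayCoeff (a * v i) (T i.succ) :=
    (Fintype.prod_sum fun i x => quarterChar (a * v i * x) * grayProd (T i.succ) x).symm
  simp only [Jchar, row, Int.cast_sum, Int.cast_mul, Int.cast_prod, mul_sum, ← mul_assoc, expand]
  rw [sum_comm, dualSum]
  refine sum_congr rfl fun a _ => ?_
  rw [← mul_sum, factor, Fin.prod_univ_succ]
  simp [dualGen]

lemma four_mul_Jchar_columns_eq_re (T : Fin (n + 1) → Finset (Fin 2)) :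
    4 * Jchar (Dv v) (columns T) = (dualSum (dualGen v) T).re := by
  rw [← four_mul_Jchar_columns]
  simp

lemma Jchar_completeWord : Jchar (Dv v) (completeWord v) = 4 ^ n := by
  have h := four_mul_Jchar_columns_eq_re v (completeFibers (dualGen v))
  rw [dualSum_completeFibers _ (dualGen_zero v), show ((4 : ℤ[i]) ^ (n + 1)).re = 4 ^ (n + 1) by
    norm_cast, pow_succ'] at h
  exact (mul_right_inj' four_ne_zero).mp h

lemma two_mul_Jchar_partialWord {X : Finset (Fin (n + 1))} (hX : X ⊆ oddSupport (dualGen v)) :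
    2 * Jchar (Dv v) (partialWord v X) = 4 ^ (n + 1 - #(oddSupport (dualGen v)))
      * 2 ^ #(oddSupport (dualGen v))
      * ((⟨1, 1⟩ : ℤ[i]) ^ #X * ⟨1, -1⟩ ^ (#(oddSupport (dualGen v)) - #X)).re := by
  have h := four_mul_Jchar_columns_eq_re v (partialFibers (dualGen v) X)
  rw [re_dualSum_partialFibers _ (dualGen_zero v) hX] at h
  rw [partialWord]
  linarith

lemma eq_completeWord_or_partialWord {s : Finset (Fin (n + 1) × Fin 2)} (hs : s.Nonempty)
    (hJ : Jchar (Dv v) s ≠ 0) :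
    s = completeWord v ∨ ∃ X ⊆ oddSupport (dualGen v), s = partialWord v X := by
  rw [← columns_fibers s] at hs hJ ⊢
  have hsum : dualSum (dualGen v) (fibers s) ≠ 0 := by
    rintro h
    apply hJ
    simpa [h] using four_mul_Jchar_columns_eq_re v (fibers s)
  rcases eq_of_dualSum_ne_zero _ hsum with h | h | ⟨X, hX, h⟩
  · simp [columns, h] at hs
  · exact Or.inl (congrArg columns h)
  · exact Or.inr ⟨X, hX, congrArg columns h⟩

lemma sum_dualGen (g : ZMod 4 → ℕ) : ∑ j, g (dualGen v j) = g 3 + ∑ z, freq v z * g z := by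
  rw [Fin.sum_univ_succ]
  simp only [dualGen, Fin.cons_zero, Fin.cons_succ]
  rw [← sum_fiberwise univ v (fun i => g (v i))]
  congr 1
  refine sum_congr rfl fun z _ => ?_
  rw [sum_congr rfl fun i hi => congrArg g (mem_filter.mp hi).2, sum_const, smul_eq_mul, freq]

lemma card_oddSupport_dualGen : #(oddSupport (dualGen v)) = freq v 1 + freq v 3 + 1 := by
  rw [oddSupport, card_filter, sum_dualGen v (fun z => if z = 1 ∨ z = 3 then 1 else 0),
    sum_zmod_four]
  simp +decide
  ring

lemma card_completeWord : #(completeWord v) = 2 * freq v 1 + 2 * freq v 3 + 2 := by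
  rw [completeWord, card_columns]
  simp only [completeFibers]
  rw [sum_dualGen v (fun z => #(completeShape z)), sum_zmod_four]
  simp +decide [completeShape]
  ring

lemma card_partialWord (X : Finset (Fin (n + 1))) :
    #(partialWord v X) = freq v 1 + 2 * freq v 2 + freq v 3 + 1 := by
  rw [partialWord, card_columns]
  simp only [partialFibers, card_partialShape]
  rw [sum_dualGen v (fun z => #(partialShape z true)), sum_zmod_four]
  simp +decide [partialShape]
  ring

lemma partialWord_injOn : Set.InjOn (partialWord v) (oddSupport (dualGen v)).powerset := by
  intro X hX Y hY h
  have hfib := columns_injective h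
  ext j
  by_cases hj : j ∈ oddSupport (dualGen v)
  · simpa using partialShape_injective_of_odd _ (mem_filter.mp hj).2 _ _ (congrFun hfib j)
  · exact iff_of_false (fun h => hj (mem_powerset.mp hX h)) (fun h => hj (mem_powerset.mp hY h))

lemma completeWord_ne_partialWord (X : Finset (Fin (n + 1))) : completeWord v ≠ partialWord v X :=
  fun h => completeShape_ne_partialShape_neg_one _ (congrFun (columns_injective h) 0)

lemma rho_Dv (s : Finset (Fin (n + 1) × Fin 2)) :
    rho (Dv v) s = |(Jchar (Dv v) s : ℚ)| / 4 ^ n := by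
  simp [rho]

lemma rho_completeWord : rho (Dv v) (completeWord v) = 1 := by
  rw [rho_Dv, Jchar_completeWord]
  simp

lemma Jchar_partialWord_ne_zero_iff {X : Finset (Fin (n + 1))}
    (hX : X ⊆ oddSupport (dualGen v)) :
    Jchar (Dv v) (partialWord v X) ≠ 0
      ↔ ((⟨1, 1⟩ : ℤ[i]) ^ #X * ⟨1, -1⟩ ^ (#(oddSupport (dualGen v)) - #X)).re ≠ 0 := by
  have h := two_mul_Jchar_partialWord v hX
  constructor
  · intro hJ hre
    rw [hre, mul_zero] at h
    omega
  · intro hre hJ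
    rw [hJ, mul_zero, eq_comm] at h
    exact hre (by simpa using h)

lemma rho_partialWord {X : Finset (Fin (n + 1))} (hX : X ⊆ oddSupport (dualGen v))
    (hJ : Jchar (Dv v) (partialWord v X) ≠ 0) :
    rho (Dv v) (partialWord v X) = 1 / 2 ^ ((freq v 1 + freq v 3) / 2) := by
  have h := two_mul_Jchar_partialWord v hX
  have habs := abs_re_one_add_pow_mul_one_sub_pow ((Jchar_partialWord_ne_zero_iff v hX).mp hJ)
  have hM := card_oddSupport_dualGen v
  have hMle : #(oddSupport (dualGen v)) ≤ n + 1 := by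
    simpa using card_le_univ (oddSupport (dualGen v))
  have hX' : #X ≤ #(oddSupport (dualGen v)) := card_le_card hX
  rw [Nat.add_sub_cancel' hX'] at habs
  set M := #(oddSupport (dualGen v))
  set k := (freq v 1 + freq v 3) / 2
  have h2 := congrArg abs h
  rw [abs_mul, abs_mul, habs, abs_two,
    abs_of_nonneg (by positivity : (0 : ℤ) ≤ 4 ^ (n + 1 - M) * 2 ^ M)] at h2
  have hJabs : 2 * (|Jchar (Dv v) (partialWord v X)| * 2 ^ k) = 2 * 4 ^ n :=
    calc 2 * (|Jchar (Dv v) (partialWord v X)| * 2 ^ k)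
        = (2 : ℤ) ^ (2 * (n + 1 - M)) * 2 ^ M * 2 ^ (M / 2) * 2 ^ k := by
          rw [← mul_assoc, h2, pow_mul]; norm_num
      _ = 2 ^ (2 * n + 1) := by rw [← pow_add, ← pow_add, ← pow_add]; congr 1; omega
      _ = 2 * 4 ^ n := by rw [pow_succ, pow_mul]; norm_num; ring
  have hq : |(Jchar (Dv v) (partialWord v X) : ℚ)| * 2 ^ k = 4 ^ n := by
    exact_mod_cast mul_left_cancel₀ two_ne_zero hJabs
  rw [rho_Dv, ← hq]
  field_simp

lemma card_filter_Jchar_partialWord_ne_zero :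
    #((oddSupport (dualGen v)).powerset.filter fun X => Jchar (Dv v) (partialWord v X) ≠ 0)
      = 2 * 4 ^ ((freq v 1 + freq v 3) / 2) := by
  rw [filter_congr fun X hX => Jchar_partialWord_ne_zero_iff v (mem_powerset.mp hX),
    card_powerset_filter_re_ne_zero ⟨0, zero_mem_oddSupport_dualGen v⟩,
    card_oddSupport_dualGen, Nat.add_sub_cancel]

end Design

/-- Theorem 1: the design `D` generated by `(v, Iₙ)` has exactly 1 complete
word of length `k₂ = 2f₁+2f₃+2` and exactly `2/ρ² = 2·4^⌊(f₁+f₃)/2⌋` partial words of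
length `k₁ = f₁+2f₂+f₃+1` with aliasing index `ρ = 2^{−⌊(f₁+f₃)/2⌋}`; every other
nonempty subset of columns has aliasing index 0. -/
theorem statement4 (n : ℕ) (v : Fin n → ZMod 4)
    (f1 f2 f3 : ℕ) (h1 : f1 = freq v 1) (h2 : f2 = freq v 2) (h3 : f3 = freq v 3)
    (k1 k2 : ℕ) (hk1 : k1 = f1 + 2 * f2 + f3 + 1) (hk2 : k2 = 2 * f1 + 2 * f3 + 2)
    (p : ℚ) (hp : p = 1 / 2 ^ ((f1 + f3) / 2)) :
    ∃ S0 S1 : Finset (Finset (Fin (n + 1) × Fin 2)),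
      S0.card = 1 ∧
      S1.card = 2 * 4 ^ ((f1 + f3) / 2) ∧
      Disjoint S0 S1 ∧
      (∀ s ∈ S0, s.card = k2 ∧ rho (Dv v) s = 1) ∧
      (∀ s ∈ S1, s.card = k1 ∧ rho (Dv v) s = p) ∧
      (∀ s : Finset (Fin (n + 1) × Fin 2),
        s.Nonempty → s ∉ S0 → s ∉ S1 → rho (Dv v) s = 0) := by
  subst h1 h2 h3 hk1 hk2 hp
  refine ⟨{completeWord v}, ((oddSupport (dualGen v)).powerset.filter
    fun X => Jchar (Dv v) (partialWord v X) ≠ 0).image (partialWord v), card_singleton _,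
    ?_, ?_, ?_, ?_, ?_⟩
  · rw [card_image_of_injOn ((partialWord_injOn v).mono (filter_subset _ _)),
      card_filter_Jchar_partialWord_ne_zero]
  · simpa using fun X _ _ => (completeWord_ne_partialWord v X).symm
  · simpa using ⟨card_completeWord v, rho_completeWord v⟩
  · simp only [mem_image, mem_filter, mem_powerset, forall_exists_index, and_imp]
    rintro _ X hX hJ rfl
    exact ⟨card_partialWord v X, rho_partialWord v hX hJ⟩
  · intro s hs hs0 hs1
    by_contra hρ
    have hJ : Jchar (Dv v) s ≠ 0 := fun hJ => hρ (by simp [rho_Dv, hJ])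
    rcases eq_completeWord_or_partialWord v hs hJ with rfl | ⟨X, hX, rfl⟩
    · exact hs0 (mem_singleton_self _)
    · exact hs1 (mem_image_of_mem _ (mem_filter.mpr ⟨mem_powerset.mpr hX, hJ⟩))
end

section
/- Let D be the 2^{2n} × (2n+2) design generated via the Gray map from G = (v, I_n), with f_i the number of occurrences of i ∈ Z_4 in v. Then D is a regular design (every subset of columns has aliasing index 0 or 1) if and only if f_1 + f_3 ≤ 1. -/
open Finset

abbrev GI := GaussianInt
def II : GI := ⟨0, 1⟩
def ee (z : ZMod 4) : GI := II ^ z.val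
lemma ee_add : ∀ x y : ZMod 4, ee (x + y) = ee x * ee y := by decide
lemma ee_zero : ee 0 = 1 := by decide
lemma ee_sum {ι : Type*} (s : Finset ι) (f : ι → ZMod 4) :
    ee (∑ i ∈ s, f i) = ∏ i ∈ s, ee (f i) := by
  classical
  induction s using Finset.cons_induction with
  | empty => simp [ee_zero]
  | cons a s ha ih => rw [Finset.sum_cons, Finset.prod_cons, ee_add, ih]

def cf (b0 b1 : Bool) (x : ZMod 4) : ℤ :=
  (if b0 then gray x 0 else 1) * (if b1 then gray x 1 else 1)

def dd (b0 b1 : Bool) (k : ZMod 4) : GI :=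
  match b0, b1 with
  | false, false => if k = 0 then 2 else 0
  | true,  true  => if k = 2 then 2 else 0
  | true,  false => if k = 1 then 1 - II else if k = 3 then 1 + II else 0
  | false, true  => if k = 1 then 1 + II else if k = 3 then 1 - II else 0

lemma cf_expand : ∀ (b0 b1 : Bool) (x : ZMod 4),
    2 * ((cf b0 b1 x : ℤ) : GI) = ∑ k : ZMod 4, dd b0 b1 k * ee (k * x) := by decide

def V (b0 b1 : Bool) (m : ZMod 4) : GI := ∑ x : ZMod 4, ee (m * x) * ((cf b0 b1 x : ℤ) : GI)

lemma sum_fn_prod {M : Type*} [CommSemiring M] (n : ℕ) (g : Fin n → ZMod 4 → M) :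
    ∑ u : Fin n → ZMod 4, ∏ i, g i (u i) = ∏ i, ∑ x, g i x := by
  induction n with
  | zero => simp
  | succ n ih =>
    rw [← (Fin.consEquiv (fun _ : Fin (n+1) => ZMod 4)).sum_comp
      (fun u => ∏ i, g i (u i))]
    rw [Fintype.sum_prod_type]
    simp only [Fin.consEquiv_apply]
    have : ∀ (x : ZMod 4) (u : Fin n → ZMod 4),
        ∏ i, g i ((Fin.cons x u : Fin (n+1) → ZMod 4) i) = g 0 x * ∏ i, g i.succ (u i) := by
      intro x u
      rw [Fin.prod_univ_succ]
      simp
    simp only [this]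
    rw [Fin.prod_univ_succ]
    simp only [← Finset.sum_mul, ← Finset.mul_sum, ih]

lemma key (n : ℕ) (v : Fin n → ZMod 4) (b : Fin (n+1) → Fin 2 → Bool) :
    2 * ((Jchar (Dv v) (univ.filter fun p => b p.1 p.2) : ℤ) : GI)
      = ∑ k : ZMod 4, dd (b 0 0) (b 0 1) k *
          ∏ i : Fin n, V (b i.succ 0) (b i.succ 1) (k * v i) := by
  classical
  have hprod : ∀ u : Fin n → ZMod 4,
      (∏ p ∈ univ.filter fun p : Fin (n+1) × Fin 2 => b p.1 p.2, ((Dv v u p : ℤ) : GI))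
        = ((cf (b 0 0) (b 0 1) (∑ i, u i * v i) : ℤ) : GI) *
            ∏ i : Fin n, ((cf (b i.succ 0) (b i.succ 1) (u i) : ℤ) : GI) := by
    intro u
    rw [Finset.prod_filter]
    rw [Fintype.prod_prod_type]
    have : ∀ j : Fin (n+1),
        (∏ c : Fin 2, if b j c then ((Dv v u (j, c) : ℤ) : GI) else 1)
          = ((cf (b j 0) (b j 1) ((Fin.cons (∑ i, u i * v i) u : Fin (n+1) → ZMod 4) j) : ℤ) : GI) := by
      intro j
      rw [Fin.prod_univ_two]
      cases hb0 : b j 0 <;> cases hb1 : b j 1 <;> simp [cf, Dv, hb0, hb1]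
    simp only [this]
    rw [Fin.prod_univ_succ, Fin.cons_zero]
    apply congrArg
    exact Finset.prod_congr rfl (fun i _ => by rw [Fin.cons_succ])
  rw [Jchar]
  push_cast
  simp only [hprod]
  rw [Finset.mul_sum]
  have step2 : ∀ u : Fin n → ZMod 4,
      2 * (((cf (b 0 0) (b 0 1) (∑ i, u i * v i) : ℤ) : GI) *
        ∏ i : Fin n, ((cf (b i.succ 0) (b i.succ 1) (u i) : ℤ) : GI))
      = ∑ k : ZMod 4, dd (b 0 0) (b 0 1) k *
          ∏ i : Fin n, (ee ((k * v i) * u i) * ((cf (b i.succ 0) (b i.succ 1) (u i) : ℤ) : GI)) := by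
    intro u
    rw [← mul_assoc, cf_expand, Finset.sum_mul]
    apply Finset.sum_congr rfl
    intro k _
    rw [mul_assoc]
    congr 1
    have hk : k * ∑ i, u i * v i = ∑ i, (k * v i) * u i := by
      rw [Finset.mul_sum]
      exact Finset.sum_congr rfl (fun i _ => by ring)
    rw [hk, ee_sum, ← Finset.prod_mul_distrib]
  simp only [step2]
  rw [Finset.sum_comm]
  apply Finset.sum_congr rfl
  intro k _
  rw [← Finset.mul_sum]
  congr 1
  exact sum_fn_prod n (fun i x => ee ((k * v i) * x) * ((cf (b i.succ 0) (b i.succ 1) x : ℤ) : GI))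

lemma sum_zmod4 {M : Type*} [AddCommMonoid M] (f : ZMod 4 → M) :
    ∑ k, f k = f 0 + (f 1 + (f 2 + f 3)) := by
  have huniv : (univ : Finset (ZMod 4)) = {0, 1, 2, 3} := by decide
  rw [huniv]
  rw [Finset.sum_insert (by decide), Finset.sum_insert (by decide),
    Finset.sum_insert (by decide), Finset.sum_singleton]

lemma V_even : ∀ (b0 b1 : Bool) (w : ZMod 4), w ≠ 1 → w ≠ 3 →
    (V b0 b1 w = 0 ∨ V b0 b1 w = 4) := by decide

lemma mul3 : ∀ w : ZMod 4, w ≠ 1 → w ≠ 3 → 3 * w = w := by decide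

lemma two_mul_ne : ∀ w : ZMod 4, 2 * w ≠ 1 ∧ 2 * w ≠ 3 := by decide

lemma dd_even_vanish : ∀ h0 h1 : Bool, h0 ≠ h1 → dd h0 h1 0 = 0 ∧ dd h0 h1 2 = 0 := by decide

lemma dd_odd_sum : ∀ h0 h1 : Bool, h0 ≠ h1 → dd h0 h1 1 + dd h0 h1 3 = 2 := by decide

lemma headodd : ∀ (h0 h1 b0 b1 : Bool) (w : ZMod 4), h0 ≠ h1 → (w = 1 ∨ w = 3) →
    (dd h0 h1 1 * V b0 b1 w + dd h0 h1 3 * V b0 b1 (3 * w) = 0 ∨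
     dd h0 h1 1 * V b0 b1 w + dd h0 h1 3 * V b0 b1 (3 * w) = 8 ∨
     dd h0 h1 1 * V b0 b1 w + dd h0 h1 3 * V b0 b1 (3 * w) = -8) := by decide

lemma cast_inj' {a b : ℤ} (h : (a : GI) = (b : GI)) : a = b := by
  have := congrArg Zsqrtd.re h
  simpa using this

lemma twoGI_ne_zero : (2 : GI) ≠ 0 := by decide

lemma prod_zero_or {ι : Type*} {t : Finset ι} {f : ι → GI} {c : GI}
    (h : ∀ i ∈ t, f i = 0 ∨ f i = c) :
    (∏ i ∈ t, f i) = 0 ∨ (∏ i ∈ t, f i) = c ^ t.card := by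
  classical
  by_cases hz : ∃ i ∈ t, f i = 0
  · obtain ⟨i, hi, h0⟩ := hz
    exact Or.inl (Finset.prod_eq_zero hi h0)
  · push_neg at hz
    right
    rw [Finset.prod_congr rfl (fun i hi => ((h i hi).resolve_left (hz i hi))),
      Finset.prod_const]

lemma conclude {J : ℤ} {n : ℕ}
    (h : 2 * (J : GI) = 0 ∨ 2 * (J : GI) = 2 * (4 : GI) ^ n ∨
      2 * (J : GI) = -(2 * (4 : GI) ^ n)) :
    J = 0 ∨ J = 4 ^ n ∨ J = -(4 ^ n) := by
  rcases h with h | h | h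
  · left
    have : (J : GI) = ((0 : ℤ) : GI) := by
      apply mul_left_cancel₀ twoGI_ne_zero; simpa using h
    exact cast_inj' this
  · right; left
    have : (J : GI) = ((4 ^ n : ℤ) : GI) := by
      apply mul_left_cancel₀ twoGI_ne_zero; push_cast; simpa using h
    exact cast_inj' this
  · right; right
    have : (J : GI) = ((-(4 ^ n) : ℤ) : GI) := by
      apply mul_left_cancel₀ twoGI_ne_zero; push_cast; rw [h]; ring
    exact cast_inj' this

lemma g_even {n : ℕ} {v : Fin n → ZMod 4} {b : Fin (n+1) → Fin 2 → Bool} (k : ZMod 4)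
    (hk : ∀ i, k * v i ≠ 1 ∧ k * v i ≠ 3) :
    (∏ i : Fin n, V (b i.succ 0) (b i.succ 1) (k * v i)) = 0 ∨
    (∏ i : Fin n, V (b i.succ 0) (b i.succ 1) (k * v i)) = 4 ^ n := by
  have := prod_zero_or (t := univ)
    (f := fun i : Fin n => V (b i.succ 0) (b i.succ 1) (k * v i)) (c := 4)
    (fun i _ => V_even _ _ _ (hk i).1 (hk i).2)
  simpa using this

lemma forward_J (n : ℕ) (v : Fin n → ZMod 4)
    (hF : (univ.filter fun i => v i = 1 ∨ v i = 3).card ≤ 1)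
    (b : Fin (n+1) → Fin 2 → Bool) :
    Jchar (Dv v) (univ.filter fun p => b p.1 p.2) = 0 ∨
    Jchar (Dv v) (univ.filter fun p => b p.1 p.2) = 4 ^ n ∨
    Jchar (Dv v) (univ.filter fun p => b p.1 p.2) = -(4 ^ n) := by
  classical
  set J : ℤ := Jchar (Dv v) (univ.filter fun p => b p.1 p.2) with hJ
  set g : ZMod 4 → GI := fun k => ∏ i : Fin n, V (b i.succ 0) (b i.succ 1) (k * v i) with hg
  have hkey : 2 * (J : GI) = ∑ k : ZMod 4, dd (b 0 0) (b 0 1) k * g k := key n v b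
  rw [sum_zmod4 (fun k => dd (b 0 0) (b 0 1) k * g k)] at hkey
  apply conclude
  by_cases hne : b 0 0 = b 0 1
  · -- head even case
    cases hb0 : b 0 0
    · rw [hb0] at hne
      rw [hb0, ← hne] at hkey
      have d0 : dd false false 0 = 2 := by decide
      have d1 : dd false false 1 = 0 := by decide
      have d2 : dd false false 2 = 0 := by decide
      have d3 : dd false false 3 = 0 := by decide
      rw [d0, d1, d2, d3] at hkey
      have hg0 : g 0 = 0 ∨ g 0 = 4 ^ n :=
        g_even 0 (fun i => by constructor <;> · rw [zero_mul]; decide)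
      rcases hg0 with h | h <;> rw [h] at hkey <;> simp only [zero_mul, add_zero, mul_zero,
        zero_add] at hkey
      · left; simpa using hkey
      · right; left; simpa using hkey
    · rw [hb0] at hne
      rw [hb0, ← hne] at hkey
      have d0 : dd true true 0 = 0 := by decide
      have d1 : dd true true 1 = 0 := by decide
      have d2 : dd true true 2 = 2 := by decide
      have d3 : dd true true 3 = 0 := by decide
      rw [d0, d1, d2, d3] at hkey
      have hg0 : g 2 = 0 ∨ g 2 = 4 ^ n :=
        g_even 2 (fun i => two_mul_ne (v i))
      rcases hg0 with h | h <;> rw [h] at hkey <;> simp only [zero_mul, add_zero, mul_zero,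
        zero_add] at hkey
      · left; simpa using hkey
      · right; left; simpa using hkey
  · -- head odd case
    have hd := dd_even_vanish _ _ hne
    rw [hd.1, hd.2] at hkey
    simp only [zero_mul, zero_add, add_zero] at hkey
    -- hkey : 2 * J = dd _ _ 1 * g 1 + dd _ _ 3 * g 3
    set O : Finset (Fin n) := univ.filter fun i => v i = 1 ∨ v i = 3 with hO
    by_cases hOe : O = ∅
    · have hev : ∀ i, v i ≠ 1 ∧ v i ≠ 3 := by
        intro i
        have : i ∉ O := by rw [hOe]; simp
        rw [hO] at this; simp at this; tauto
      have h31 : g 3 = g 1 := by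
        apply Finset.prod_congr rfl
        intro i _
        rw [mul3 (v i) (hev i).1 (hev i).2, one_mul]
      have h1 : g 1 = 0 ∨ g 1 = 4 ^ n :=
        g_even 1 (fun i => by rw [one_mul]; exact hev i)
      rw [h31, ← add_mul, dd_odd_sum _ _ hne] at hkey
      rcases h1 with h | h <;> rw [h] at hkey
      · left; simpa using hkey
      · right; left; simpa using hkey
    · have hO1 : O.card = 1 := by
        have h0 : O.card ≠ 0 := fun h => hOe (Finset.card_eq_zero.mp h)
        omega
      obtain ⟨i0, hi0⟩ := Finset.card_eq_one.mp hO1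
      have hvi0 : v i0 = 1 ∨ v i0 = 3 := by
        have : i0 ∈ O := by rw [hi0]; exact Finset.mem_singleton_self _
        rw [hO] at this; simpa using this
      have hother : ∀ i, i ≠ i0 → v i ≠ 1 ∧ v i ≠ 3 := by
        intro i hi
        have : i ∉ O := by rw [hi0]; simp [hi]
        rw [hO] at this; simp at this; tauto
      have hsplit : ∀ k : ZMod 4,
          g k = V (b i0.succ 0) (b i0.succ 1) (k * v i0) *
            ∏ i ∈ univ.erase i0, V (b i.succ 0) (b i.succ 1) (k * v i) :=
        fun k => (Finset.mul_prod_erase univ _ (Finset.mem_univ i0)).symm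
      have herase : ∀ i ∈ univ.erase i0, (3 : ZMod 4) * v i = 1 * v i := by
        intro i hi
        have hi' := Finset.ne_of_mem_erase hi
        rw [mul3 (v i) (hother i hi').1 (hother i hi').2, one_mul]
      set C : GI := ∏ i ∈ univ.erase i0, V (b i.succ 0) (b i.succ 1) (1 * v i) with hC
      have h3C : ∏ i ∈ univ.erase i0, V (b i.succ 0) (b i.succ 1) (3 * v i) = C := by
        apply Finset.prod_congr rfl
        intro i hi
        rw [herase i hi]
      rw [hsplit 1, hsplit 3, h3C] at hkey
      have hkey2 : 2 * (J : GI) =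
          (dd (b 0 0) (b 0 1) 1 * V (b i0.succ 0) (b i0.succ 1) (v i0) +
           dd (b 0 0) (b 0 1) 3 * V (b i0.succ 0) (b i0.succ 1) (3 * v i0)) * C := by
        rw [hkey, one_mul]; ring
      have hbr := headodd (b 0 0) (b 0 1) (b i0.succ 0) (b i0.succ 1) (v i0) hne hvi0
      have hCval : C = 0 ∨ C = 4 ^ (n - 1) := by
        have := prod_zero_or (t := univ.erase i0)
          (f := fun i : Fin n => V (b i.succ 0) (b i.succ 1) (1 * v i)) (c := 4)
          (fun i hi => by
            have hi' := Finset.ne_of_mem_erase hi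
            simp only [one_mul]
            exact V_even _ _ _ (hother i hi').1 (hother i hi').2)
        rwa [Finset.card_erase_of_mem (Finset.mem_univ i0), Finset.card_univ,
          Fintype.card_fin] at this
      obtain ⟨m, rfl⟩ : ∃ m, n = m + 1 := ⟨n - 1, by have := i0.pos; omega⟩
      simp only [Nat.add_sub_cancel] at hCval
      rcases hCval with hc | hc
      · left; rw [hkey2, hc, mul_zero]
      · rcases hbr with h | h | h <;> rw [hkey2, hc, h]
        · left; rw [zero_mul]
        · right; left; rw [pow_succ]; ring
        · right; right; rw [pow_succ]; ring

def bcol (x : ZMod 4) (inP : Bool) : Fin 2 → Bool := fun c =>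
  if x = 2 then true else if x = 0 then false
  else (if inP = decide (x = 1) then c == 0 else c == 1)

lemma bcol_V1 : ∀ x : ZMod 4, (x = 1 ∨ x = 3) → ∀ inP : Bool,
    V (bcol x inP 0) (bcol x inP 1) (1 * x) = (if inP then 2 + 2*II else 2 - 2*II) ∧
    V (bcol x inP 0) (bcol x inP 1) (3 * x) = (if inP then 2 - 2*II else 2 + 2*II) := by decide

lemma bcol_Ve : ∀ x : ZMod 4, ¬(x = 1 ∨ x = 3) → ∀ inP : Bool, ∀ k : ZMod 4,
    (k = 1 ∨ k = 3) → V (bcol x inP 0) (bcol x inP 1) (k * x) = 4 := by decide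

lemma dd_tf1 : dd true false 1 = 1 - II := by decide
lemma dd_tf3 : dd true false 3 = 1 + II := by decide

lemma gi_mul8 : (2 + 2*II) * (2 - 2*II) = 8 := by decide

lemma backward_J (n : ℕ) (v : Fin n → ZMod 4)
    (hF : 2 ≤ (univ.filter fun i => v i = 1 ∨ v i = 3).card) :
    ∃ s : Finset (Fin (n+1) × Fin 2), ∃ J : ℤ,
      Jchar (Dv v) s = J ∧ 0 < J ∧ J < 4 ^ n := by
  classical
  set O : Finset (Fin n) := univ.filter fun i => v i = 1 ∨ v i = 3 with hO
  set r : ℕ := O.card with hr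
  set p : ℕ := (r + 1) / 2 with hp
  obtain ⟨P, hPO, hPcard⟩ := Finset.exists_subset_card_eq (show p ≤ r by omega)
  set b : Fin (n+1) → Fin 2 → Bool :=
    Fin.cases (fun c => c == 0) (fun i => bcol (v i) (decide (i ∈ P))) with hb
  have hb00 : b 0 0 = true := rfl
  have hb01 : b 0 1 = false := rfl
  have hbsucc : ∀ i : Fin n, ∀ c, b i.succ c = bcol (v i) (decide (i ∈ P)) c := by
    intro i c
    simp only [hb, Fin.cases_succ]
  set g : ZMod 4 → GI := fun k => ∏ i : Fin n, V (b i.succ 0) (b i.succ 1) (k * v i) with hg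
  have hkey : 2 * ((Jchar (Dv v) (univ.filter fun pr => b pr.1 pr.2) : ℤ) : GI)
      = ∑ k : ZMod 4, dd (b 0 0) (b 0 1) k * g k := key n v b
  rw [sum_zmod4 (fun k => dd (b 0 0) (b 0 1) k * g k), hb00, hb01] at hkey
  have d0 : dd true false 0 = 0 := by decide
  have d2 : dd true false 2 = 0 := by decide
  rw [d0, d2, dd_tf1, dd_tf3] at hkey
  simp only [zero_mul, zero_add, add_zero] at hkey
  -- compute g 1 and g 3
  have hgval : ∀ k : ZMod 4, k = 1 ∨ k = 3 →
      g k = ((∏ i ∈ P, V (b i.succ 0) (b i.succ 1) (k * v i)) *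
             ∏ i ∈ O \ P, V (b i.succ 0) (b i.succ 1) (k * v i)) * 4 ^ (n - r) := by
    intro k hk
    simp only [hg]
    rw [← Finset.prod_filter_mul_prod_filter_not univ (fun i => v i = 1 ∨ v i = 3)
      (fun i => V (b i.succ 0) (b i.succ 1) (k * v i))]
    congr 1
    · rw [← hO, ← Finset.prod_sdiff hPO, mul_comm]
    · have : ∀ i ∈ univ.filter (fun i => ¬(v i = 1 ∨ v i = 3)),
          V (b i.succ 0) (b i.succ 1) (k * v i) = 4 := by
        intro i hi
        simp only [Finset.mem_filter] at hi
        rw [hbsucc i 0, hbsucc i 1]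
        exact bcol_Ve (v i) hi.2 _ k hk
      rw [Finset.prod_congr rfl this, Finset.prod_const]
      congr 1
      have h2 := Finset.card_filter_add_card_filter_not
        (s := (univ : Finset (Fin n))) (p := fun i => v i = 1 ∨ v i = 3)
      rw [Finset.card_univ, Fintype.card_fin, ← hO] at h2
      omega
  have hmemO : ∀ i ∈ O, v i = 1 ∨ v i = 3 := by
    intro i hi; rw [hO] at hi; simpa using hi
  have hP1 : ∀ i ∈ P, V (b i.succ 0) (b i.succ 1) (1 * v i) = 2 + 2*II := by
    intro i hi
    rw [hbsucc i 0, hbsucc i 1, decide_eq_true hi]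
    simpa using (bcol_V1 (v i) (hmemO i (hPO hi)) true).1
  have hP3 : ∀ i ∈ P, V (b i.succ 0) (b i.succ 1) (3 * v i) = 2 - 2*II := by
    intro i hi
    rw [hbsucc i 0, hbsucc i 1, decide_eq_true hi]
    simpa using (bcol_V1 (v i) (hmemO i (hPO hi)) true).2
  have hQ1 : ∀ i ∈ O \ P, V (b i.succ 0) (b i.succ 1) (1 * v i) = 2 - 2*II := by
    intro i hi
    rw [Finset.mem_sdiff] at hi
    rw [hbsucc i 0, hbsucc i 1, decide_eq_false hi.2]
    simpa using (bcol_V1 (v i) (hmemO i hi.1) false).1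
  have hQ3 : ∀ i ∈ O \ P, V (b i.succ 0) (b i.succ 1) (3 * v i) = 2 + 2*II := by
    intro i hi
    rw [Finset.mem_sdiff] at hi
    rw [hbsucc i 0, hbsucc i 1, decide_eq_false hi.2]
    simpa using (bcol_V1 (v i) (hmemO i hi.1) false).2
  have hcardQ : (O \ P).card = r - p := by rw [Finset.card_sdiff_of_subset hPO, hPcard]
  have hg1 : g 1 = (2 + 2*II) ^ p * (2 - 2*II) ^ (r - p) * 4 ^ (n - r) := by
    rw [hgval 1 (Or.inl rfl), Finset.prod_congr rfl hP1, Finset.prod_congr rfl hQ1,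
      Finset.prod_const, Finset.prod_const, hPcard, hcardQ]
  have hg3 : g 3 = (2 - 2*II) ^ p * (2 + 2*II) ^ (r - p) * 4 ^ (n - r) := by
    rw [hgval 3 (Or.inr rfl), Finset.prod_congr rfl hP3, Finset.prod_congr rfl hQ3,
      Finset.prod_const, Finset.prod_const, hPcard, hcardQ]
  rw [hg1, hg3] at hkey
  set q : ℕ := r - p with hq
  have hrn : r ≤ n := by
    rw [hr]
    have := Finset.card_le_univ O
    simpa using this
  by_cases hpar : p = q
  · -- r even, p = q ≥ 1
    have hp1 : 1 ≤ p := by omega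
    have hJval : 2 * ((Jchar (Dv v) (univ.filter fun pr => b pr.1 pr.2) : ℤ) : GI)
        = 2 * ((8 ^ p * 4 ^ (n - r) : ℤ) : GI) := by
      rw [hkey, ← hpar]
      have h8 : (2 + 2*II) ^ p * (2 - 2*II) ^ p = 8 ^ p := by
        rw [← mul_pow, gi_mul8]
      push_cast
      calc (1 - II) * ((2 + 2*II) ^ p * (2 - 2*II) ^ p * 4 ^ (n - r)) +
            (1 + II) * ((2 - 2*II) ^ p * (2 + 2*II) ^ p * 4 ^ (n - r))
          = ((1 - II) + (1 + II)) * ((2 + 2*II) ^ p * (2 - 2*II) ^ p * 4 ^ (n - r)) := by ring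
        _ = 2 * (8 ^ p * 4 ^ (n - r)) := by rw [h8]; ring
    have hJ : Jchar (Dv v) (univ.filter fun pr => b pr.1 pr.2) = 8 ^ p * 4 ^ (n - r) :=
      cast_inj' (mul_left_cancel₀ twoGI_ne_zero hJval)
    refine ⟨_, _, hJ, by positivity, ?_⟩
    have h1 : (8 : ℤ) ^ p < 16 ^ p := by
      apply pow_lt_pow_left₀ (by norm_num) (by norm_num)
      omega
    have h2 : (4 : ℤ) ^ n = 16 ^ p * 4 ^ (n - r) := by
      have : (16 : ℤ) = 4 ^ 2 := by norm_num
      rw [this, ← pow_mul, ← pow_add]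
      congr 1
      omega
    rw [h2]
    have h3 : (0 : ℤ) < 4 ^ (n - r) := by positivity
    exact mul_lt_mul_of_pos_right h1 h3
  · -- r odd, p = q + 1, q ≥ 1
    have hpq : p = q + 1 := by omega
    have hq1 : 1 ≤ q := by omega
    have hJval : 2 * ((Jchar (Dv v) (univ.filter fun pr => b pr.1 pr.2) : ℤ) : GI)
        = 2 * ((4 * 8 ^ q * 4 ^ (n - r) : ℤ) : GI) := by
      rw [hkey, hpq]
      have h8 : (2 + 2*II) ^ q * (2 - 2*II) ^ q = 8 ^ q := by
        rw [← mul_pow, gi_mul8]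
      have hIIsq : II * II = -1 := by decide
      push_cast
      calc (1 - II) * ((2 + 2*II) ^ (q+1) * (2 - 2*II) ^ q * 4 ^ (n - r)) +
            (1 + II) * ((2 - 2*II) ^ (q+1) * (2 + 2*II) ^ q * 4 ^ (n - r)) =
          ((1 - II) * (2 + 2*II) + (1 + II) * (2 - 2*II)) *
            (((2 + 2*II) ^ q * (2 - 2*II) ^ q) * 4 ^ (n - r)) := by ring
        _ = 2 * (4 * 8 ^ q * 4 ^ (n - r)) := by
            rw [h8]
            have : (1 - II) * (2 + 2*II) + (1 + II) * (2 - 2*II) = 8 := by decide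
            rw [this]
            ring
    have hJ : Jchar (Dv v) (univ.filter fun pr => b pr.1 pr.2) = 4 * 8 ^ q * 4 ^ (n - r) :=
      cast_inj' (mul_left_cancel₀ twoGI_ne_zero hJval)
    refine ⟨_, _, hJ, by positivity, ?_⟩
    have hrq : r = 2 * q + 1 := by omega
    have h1 : (8 : ℤ) ^ q < 16 ^ q := by
      apply pow_lt_pow_left₀ (by norm_num) (by norm_num)
      omega
    have h2 : (4 : ℤ) ^ n = 4 * 16 ^ q * 4 ^ (n - r) := by
      have h16 : (16 : ℤ) = 4 ^ 2 := by norm_num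
      rw [h16, ← pow_mul]
      rw [← pow_succ']
      rw [← pow_add]
      congr 1
      omega
    rw [h2]
    have h3 : (0 : ℤ) < 4 ^ (n - r) := by positivity
    have h4 : (4 : ℤ) * 8 ^ q < 4 * 16 ^ q := by linarith
    exact mul_lt_mul_of_pos_right h4 h3

lemma card_rows (n : ℕ) : (Fintype.card (Fin n → ZMod 4) : ℚ) = 4 ^ n := by
  rw [Fintype.card_fun]
  simp [ZMod.card]

lemma rho_cases {n : ℕ} {v : Fin n → ZMod 4} {s : Finset (Fin (n+1) × Fin 2)}
    (h : Jchar (Dv v) s = 0 ∨ Jchar (Dv v) s = 4 ^ n ∨ Jchar (Dv v) s = -(4 ^ n)) :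
    rho (Dv v) s = 0 ∨ rho (Dv v) s = 1 := by
  have hc : (Fintype.card (Fin n → ZMod 4) : ℚ) = 4 ^ n := card_rows n
  rcases h with h | h | h
  · left; rw [rho, h]; simp
  · right; rw [rho, h, hc]; push_cast
    rw [abs_of_nonneg (by positivity)]
    exact div_self (by positivity)
  · right; rw [rho, h, hc]; push_cast
    rw [abs_neg, abs_of_nonneg (by positivity)]
    exact div_self (by positivity)

lemma freq_card (n : ℕ) (v : Fin n → ZMod 4) :
    (univ.filter fun i => v i = 1 ∨ v i = 3).card = freq v 1 + freq v 3 := by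
  rw [freq, freq, Finset.filter_or]
  apply Finset.card_union_of_disjoint
  rw [Finset.disjoint_left]
  intro i h1 h3
  simp only [Finset.mem_filter] at h1 h3
  have : (1 : ZMod 4) ≠ 3 := by decide
  exact this (h1.2 ▸ h3.2)


set_option maxHeartbeats 1000000 in
/-- Corollary 1: `D` is regular (every subset of columns has aliasing index
0 or 1) if and only if `f₁ + f₃ ≤ 1`. -/
theorem statement5 (n : ℕ) (v : Fin n → ZMod 4) :
    (∀ s : Finset (Fin (n + 1) × Fin 2), rho (Dv v) s = 0 ∨ rho (Dv v) s = 1) ↔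
      freq v 1 + freq v 3 ≤ 1 := by
  constructor
  · intro hreg
    by_contra hgt
    push_neg at hgt
    have hF : 2 ≤ (univ.filter fun i => v i = 1 ∨ v i = 3).card := by
      rw [freq_card]; omega
    obtain ⟨s, J, hJ, hpos, hlt⟩ := backward_J n v hF
    have hc : (Fintype.card (Fin n → ZMod 4) : ℚ) = 4 ^ n := card_rows n
    rcases hreg s with h | h
    · rw [rho, hJ, hc] at h
      rcases div_eq_zero_iff.mp h with h' | h'
      · rw [abs_eq_zero] at h'
        exact absurd (by exact_mod_cast h' : J = 0) (by omega)
      · exact absurd h' (by positivity)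
    · rw [rho, hJ, hc] at h
      have h4 : ((4 : ℚ) ^ n) ≠ 0 := by positivity
      rw [div_eq_one_iff_eq h4] at h
      rw [abs_of_pos (by exact_mod_cast hpos)] at h
      have : J = 4 ^ n := by exact_mod_cast h
      omega
  · intro hF s
    have hF' : (univ.filter fun i => v i = 1 ∨ v i = 3).card ≤ 1 := by
      rw [freq_card]; omega
    have hs : s = univ.filter (fun p : Fin (n+1) × Fin 2 =>
        (fun j c => decide ((j, c) ∈ s)) p.1 p.2) := by
      ext ⟨j, c⟩; simp
    rw [hs]
    exact rho_cases (forward_J n v hF' (fun j c => decide ((j, c) ∈ s)))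
end

section
/- Let D be the 2^{2n} × (2n+2) design generated from G = (v, I_n), with k_1 = f_1 + 2f_2 + f_3 + 1 and k_2 = 2f_1 + 2f_3 + 2. Its generalized wordlength pattern satisfies: if k_1 ≠ k_2 then A_{k_1}(D) = 2, A_{k_2}(D) = 1, and A_i(D) = 0 for all other i; if k_1 = k_2 = k then A_k(D) = 3 and A_i(D) = 0 for i ≠ k. -/
open Finset

local notation "ℤi" => GaussianInt

def gg (e : Finset (Fin 2)) (w : ZMod 4) : ℤ := ∏ c ∈ e, gray w c
def chi (x : ZMod 4) : ℤi := (⟨0,1⟩ : ℤi) ^ x.val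
def cc (e : Finset (Fin 2)) (k : ZMod 4) : ℤi :=
  if e = ∅ then (if k = 0 then 2 else 0)
  else if e = {0} then (if k = 1 then ⟨1,-1⟩ else if k = 3 then ⟨1,1⟩ else 0)
  else if e = {1} then (if k = 1 then ⟨1,1⟩ else if k = 3 then ⟨1,-1⟩ else 0)
  else (if k = 2 then 2 else 0)
def GG (e : Finset (Fin 2)) (w : ZMod 4) : ℤi := ∑ x : ZMod 4, chi (w * x) * (gg e x : ℤi)
def kap (w : ZMod 4) : ℕ := if w = 0 then 0 else if w = 2 then 2 else 1
def kap2 (e : Finset (Fin 2)) (w : ZMod 4) : ℕ :=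
  if e = ∅ then 0
  else if e = ({0, 1} : Finset (Fin 2)) then (if w = 1 ∨ w = 3 then 2 else 0)
  else kap w

lemma decomp : ∀ (e : Finset (Fin 2)) (w : ZMod 4),
    (2 : ℤi) * (gg e w : ℤi) = ∑ k : ZMod 4, cc e k * chi (k * w) := by decide
lemma conv : ∀ (e : Finset (Fin 2)) (d : ZMod 4),
    ∑ k : ZMod 4, cc e k * cc e (d - k) = if d = 0 then 4 else 0 := by decide
lemma Tsum : ∀ (w w' : ZMod 4),
    ∑ e : Finset (Fin 2), GG e w * GG e w' = if w + w' = 0 then 16 else 0 := by decide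
lemma GG_card : ∀ (e : Finset (Fin 2)) (w : ZMod 4), GG e w ≠ 0 → e.card = kap w := by decide
lemma cc_kap : ∀ (e : Finset (Fin 2)) (k w : ZMod 4), cc e k ≠ 0 → kap (k * w) = kap2 e w := by decide
lemma chi_add : ∀ (x y : ZMod 4), chi (x + y) = chi x * chi y := by decide
lemma kap_split : ∀ w : ZMod 4, kap w =
    (if w = 1 then 1 else 0) + 2 * (if w = 2 then 1 else 0) + (if w = 3 then 1 else 0) := by decide
lemma kap2u_split : ∀ w : ZMod 4, kap2 {0,1} w =
    2 * (if w = 1 then 1 else 0) + 2 * (if w = 3 then 1 else 0) := by decide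
lemma kap2_empty : ∀ w, kap2 ∅ w = 0 := by decide
lemma kap2_s0 : ∀ w, kap2 {0} w = kap w := by decide
lemma kap2_s1 : ∀ w, kap2 {1} w = kap w := by decide

lemma sum_prod_pi {β : Type*} [Fintype β] (m : ℕ) (h : Fin m → β → ℤi) :
    ∑ f : Fin m → β, ∏ i, h i (f i) = ∏ i, ∑ b, h i b := by
  induction m with
  | zero => simp
  | succ m ih =>
      rw [← Equiv.sum_comp (Fin.consEquiv (fun _ : Fin (m+1) => β)), Fintype.sum_prod_type]
      simp only [Fin.consEquiv_apply, Fin.prod_univ_succ, Fin.cons_zero, Fin.cons_succ]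
      calc ∑ x : β, ∑ f : Fin m → β, h 0 x * ∏ i : Fin m, h i.succ (f i)
          = ∑ x : β, h 0 x * ∑ f : Fin m → β, ∏ i : Fin m, h i.succ (f i) := by
            simp [Finset.mul_sum]
        _ = (∑ x : β, h 0 x) * ∏ i : Fin m, ∑ b, h i.succ b := by
            rw [ih, Finset.sum_mul]

lemma chi_sum (m : ℕ) (f : Fin m → ZMod 4) : chi (∑ i, f i) = ∏ i, chi (f i) := by
  induction m with
  | zero => simp; decide
  | succ m ih => rw [Fin.sum_univ_succ, Fin.prod_univ_succ, chi_add, ih]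

def Jt {n : ℕ} (v : Fin n → ZMod 4) (t : Fin (n + 1) → Finset (Fin 2)) : ℤi :=
  ∑ u : Fin n → ZMod 4, ∏ j, (gg (t j) ((Fin.cons (∑ i, u i * v i) u : Fin (n+1) → ZMod 4) j) : ℤi)

lemma master {n : ℕ} (v : Fin n → ZMod 4) (t : Fin (n + 1) → Finset (Fin 2)) :
    2 * Jt v t = ∑ k : ZMod 4, cc (t 0) k * ∏ i : Fin n, GG (t i.succ) (k * v i) := by
  rw [Jt, Finset.mul_sum]
  calc ∑ u : Fin n → ZMod 4, 2 * ∏ j, (gg (t j) ((Fin.cons (∑ i, u i * v i) u : Fin (n+1) → ZMod 4) j) : ℤi)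
      = ∑ u : Fin n → ZMod 4, ∑ k : ZMod 4,
          cc (t 0) k * ∏ i : Fin n, (chi ((k * v i) * u i) * (gg (t i.succ) (u i) : ℤi)) := by
        refine Finset.sum_congr rfl fun u _ => ?_
        rw [Fin.prod_univ_succ]
        simp only [Fin.cons_zero, Fin.cons_succ]
        rw [← mul_assoc, decomp, Finset.sum_mul]
        refine Finset.sum_congr rfl fun k _ => ?_
        rw [Finset.mul_sum]
        have : chi (∑ i, k * (u i * v i)) = ∏ i : Fin n, chi ((k * v i) * u i) := by
          rw [chi_sum]
          exact Finset.prod_congr rfl fun i _ => by ring_nf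
        rw [mul_assoc, this, ← Finset.prod_mul_distrib]
      _ = ∑ k : ZMod 4, cc (t 0) k * ∏ i : Fin n, GG (t i.succ) (k * v i) := by
        rw [Finset.sum_comm]
        refine Finset.sum_congr rfl fun k _ => ?_
        rw [← Finset.mul_sum, sum_prod_pi n (fun i x => chi ((k * v i) * x) * (gg (t i.succ) x : ℤi))]
        rfl

lemma famsum {n : ℕ} (v : Fin n → ZMod 4) (e0 : Finset (Fin 2)) :
    ∑ tt : Fin n → Finset (Fin 2), (Jt v (Fin.cons e0 tt)) ^ 2 = 16 ^ n := by
  have key : (4 : ℤi) * ∑ tt : Fin n → Finset (Fin 2), (Jt v (Fin.cons e0 tt)) ^ 2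
      = 4 * 16 ^ n := by
    calc (4 : ℤi) * ∑ tt : Fin n → Finset (Fin 2), (Jt v (Fin.cons e0 tt)) ^ 2
        = ∑ tt : Fin n → Finset (Fin 2), (2 * Jt v (Fin.cons e0 tt)) * (2 * Jt v (Fin.cons e0 tt)) := by
          rw [Finset.mul_sum]; refine Finset.sum_congr rfl fun tt _ => by ring
      _ = ∑ tt : Fin n → Finset (Fin 2), ∑ k : ZMod 4, ∑ k' : ZMod 4,
            (cc e0 k * ∏ i : Fin n, GG (tt i) (k * v i)) *
            (cc e0 k' * ∏ i : Fin n, GG (tt i) (k' * v i)) := by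
          refine Finset.sum_congr rfl fun tt _ => ?_
          rw [master, Fin.cons_zero]
          simp only [Fin.cons_succ]
          rw [Finset.sum_mul_sum]
      _ = ∑ k : ZMod 4, ∑ k' : ZMod 4, cc e0 k * cc e0 k' *
            ∏ i : Fin n, (if k * v i + k' * v i = 0 then (16 : ℤi) else 0) := by
          rw [Finset.sum_comm]
          refine Finset.sum_congr rfl fun k _ => ?_
          rw [Finset.sum_comm]
          refine Finset.sum_congr rfl fun k' _ => ?_
          calc ∑ tt : Fin n → Finset (Fin 2),
                (cc e0 k * ∏ i : Fin n, GG (tt i) (k * v i)) *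
                (cc e0 k' * ∏ i : Fin n, GG (tt i) (k' * v i))
              = cc e0 k * cc e0 k' * ∑ tt : Fin n → Finset (Fin 2),
                  ∏ i : Fin n, (GG (tt i) (k * v i) * GG (tt i) (k' * v i)) := by
                rw [Finset.mul_sum]
                refine Finset.sum_congr rfl fun tt _ => ?_
                rw [Finset.prod_mul_distrib]; ring
            _ = cc e0 k * cc e0 k' *
                  ∏ i : Fin n, (if k * v i + k' * v i = 0 then (16 : ℤi) else 0) := by
                rw [sum_prod_pi n (fun i e => GG e (k * v i) * GG e (k' * v i))]
                congr 1
                exact Finset.prod_congr rfl fun i _ => Tsum _ _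
      _ = ∑ k : ZMod 4, ∑ d : ZMod 4, cc e0 k * cc e0 (d - k) *
            ∏ i : Fin n, (if d * v i = 0 then (16 : ℤi) else 0) := by
          refine Finset.sum_congr rfl fun k _ => ?_
          refine Fintype.sum_equiv (Equiv.addLeft k) _ _ fun k' => ?_
          simp only [Equiv.coe_addLeft]
          rw [add_sub_cancel_left]
          congr 1
          exact Finset.prod_congr rfl fun i _ => by simp only [add_mul]
      _ = ∑ d : ZMod 4, (∏ i : Fin n, (if d * v i = 0 then (16 : ℤi) else 0)) *
            ∑ k : ZMod 4, cc e0 k * cc e0 (d - k) := by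
          rw [Finset.sum_comm]
          refine Finset.sum_congr rfl fun d _ => ?_
          rw [Finset.mul_sum]
          exact Finset.sum_congr rfl fun k _ => by ring
      _ = 4 * 16 ^ n := by
          have : ∀ d : ZMod 4, (∏ i : Fin n, (if d * v i = 0 then (16 : ℤi) else 0)) *
              (∑ k : ZMod 4, cc e0 k * cc e0 (d - k))
              = if d = 0 then (∏ i : Fin n, (if d * v i = 0 then (16 : ℤi) else 0)) * 4 else 0 := by
            intro d
            rw [conv]
            split_ifs with h
            · rfl
            · rw [mul_zero]
          rw [Finset.sum_congr rfl fun d _ => this d, Finset.sum_ite_eq' Finset.univ (0 : ZMod 4)]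
          simp [Finset.prod_const, mul_comm]
  have h4 : (4 : ℤi) ≠ 0 := by decide
  exact mul_left_cancel₀ h4 key

lemma support {n : ℕ} (v : Fin n → ZMod 4) (e0 : Finset (Fin 2)) (tt : Fin n → Finset (Fin 2))
    (h : Jt v (Fin.cons e0 tt) ≠ 0) :
    e0.card + ∑ i, (tt i).card = e0.card + ∑ i, kap2 e0 (v i) := by
  have h2 : (2 : ℤi) * Jt v (Fin.cons e0 tt) ≠ 0 := mul_ne_zero (by decide) h
  rw [master] at h2
  obtain ⟨k, -, hk⟩ := Finset.exists_ne_zero_of_sum_ne_zero h2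
  simp only [Fin.cons_zero, Fin.cons_succ] at hk
  have hck : cc e0 k ≠ 0 := fun hc => hk (by rw [hc, zero_mul])
  have hprod : ∀ i : Fin n, GG (tt i) (k * v i) ≠ 0 := by
    intro i
    have := (mul_ne_zero_iff.mp hk).2
    rw [Finset.prod_ne_zero_iff] at this
    exact this i (Finset.mem_univ i)
  congr 1
  refine Finset.sum_congr rfl fun i _ => ?_
  rw [GG_card _ _ (hprod i), cc_kap _ _ _ hck]

lemma fam_filtered {n : ℕ} (v : Fin n → ZMod 4) (e0 : Finset (Fin 2)) (k : ℕ) :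
    ∑ tt : Fin n → Finset (Fin 2),
      (if e0.card + ∑ i, (tt i).card = k then (Jt v (Fin.cons e0 tt)) ^ 2 else 0)
    = if k = e0.card + ∑ i, kap2 e0 (v i) then 16 ^ n else 0 := by
  by_cases hk : k = e0.card + ∑ i, kap2 e0 (v i)
  · rw [if_pos hk, ← famsum v e0]
    refine Finset.sum_congr rfl fun tt _ => ?_
    by_cases hs : e0.card + ∑ i, (tt i).card = k
    · rw [if_pos hs]
    · rw [if_neg hs]
      have : Jt v (Fin.cons e0 tt) = 0 := by
        by_contra hJ
        exact hs ((support v e0 tt hJ).trans hk.symm)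
      rw [this, zero_pow]; norm_num
  · rw [if_neg hk]
    refine Finset.sum_eq_zero fun tt _ => ?_
    by_cases hs : e0.card + ∑ i, (tt i).card = k
    · rw [if_pos hs]
      have : Jt v (Fin.cons e0 tt) = 0 := by
        by_contra hJ
        exact hk (by rw [← hs]; exact support v e0 tt hJ)
      rw [this, zero_pow]; norm_num
    · rw [if_neg hs]

def sOf {n : ℕ} (t : Fin (n + 1) → Finset (Fin 2)) : Finset (Fin (n + 1) × Fin 2) :=
  Finset.univ.filter (fun p => p.2 ∈ t p.1)

def tOf {n : ℕ} (s : Finset (Fin (n + 1) × Fin 2)) : Fin (n + 1) → Finset (Fin 2) :=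
  fun j => Finset.univ.filter (fun c => (j, c) ∈ s)

def tEquiv {n : ℕ} : (Fin (n + 1) → Finset (Fin 2)) ≃ Finset (Fin (n + 1) × Fin 2) where
  toFun := sOf
  invFun := tOf
  left_inv t := by funext j; ext c; simp [sOf, tOf]
  right_inv s := by ext ⟨j, c⟩; simp [sOf, tOf]

lemma card_sOf {n : ℕ} (t : Fin (n + 1) → Finset (Fin 2)) :
    (sOf t).card = ∑ j, (t j).card := by
  rw [sOf, Finset.card_filter, Fintype.sum_prod_type]
  refine Finset.sum_congr rfl fun j _ => ?_
  simp [Finset.card_filter]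

lemma Jchar_eq {n : ℕ} (v : Fin n → ZMod 4) (s : Finset (Fin (n + 1) × Fin 2)) :
    ((Jchar (Dv v) s : ℤ) : ℤi) = Jt v (tOf s) := by
  rw [Jchar, Jt]
  push_cast
  refine Finset.sum_congr rfl fun u _ => ?_
  calc ∏ p ∈ s, ((Dv v u p : ℤ) : ℤi)
      = ∏ p : Fin (n + 1) × Fin 2, (if p ∈ s then ((Dv v u p : ℤ) : ℤi) else 1) :=
        (Fintype.prod_ite_mem s _).symm
    _ = ∏ j : Fin (n + 1), ∏ c : Fin 2, (if (j, c) ∈ s then ((Dv v u (j, c) : ℤ) : ℤi) else 1) :=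
        Fintype.prod_prod_type _
    _ = ∏ j, (gg (tOf s j) ((Fin.cons (∑ i, u i * v i) u : Fin (n + 1) → ZMod 4) j) : ℤi) := by
        refine Finset.prod_congr rfl fun j _ => ?_
        rw [gg]
        push_cast
        rw [tOf, Finset.prod_filter]
        rfl

lemma total {n : ℕ} (v : Fin n → ZMod 4) (k : ℕ) :
    ∑ s ∈ Finset.powersetCard k (Finset.univ : Finset (Fin (n + 1) × Fin 2)),
        ((Jchar (Dv v) s : ℤ) : ℤi) ^ 2
    = ∑ e0 : Finset (Fin 2),
        (if k = e0.card + ∑ i, kap2 e0 (v i) then (16 : ℤi) ^ n else 0) := by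
  rw [Finset.powersetCard_eq_filter, Finset.sum_filter, Finset.powerset_univ]
  rw [← Equiv.sum_comp (tEquiv (n := n))]
  rw [← Equiv.sum_comp (Fin.consEquiv (fun _ : Fin (n + 1) => Finset (Fin 2))),
      Fintype.sum_prod_type]
  refine Finset.sum_congr rfl fun e0 _ => ?_
  rw [← fam_filtered v e0 k]
  refine Finset.sum_congr rfl fun tt _ => ?_
  have hc : (tEquiv (Fin.consEquiv (fun _ : Fin (n + 1) => Finset (Fin 2)) (e0, tt))).card
      = e0.card + ∑ i, (tt i).card := by
    show (sOf _).card = _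
    rw [card_sOf]
    simp [Fin.sum_univ_succ]
  have hJ : ((Jchar (Dv v) (tEquiv (Fin.consEquiv (fun _ : Fin (n + 1) => Finset (Fin 2)) (e0, tt))) : ℤ) : ℤi)
      = Jt v (Fin.cons e0 tt) := by
    rw [Jchar_eq]
    congr 1
    exact tEquiv.left_inv (Fin.consEquiv (fun _ : Fin (n + 1) => Finset (Fin 2)) (e0, tt))
  simp only [hc, hJ]

lemma sum_finset_fin2 {M : Type*} [AddCommMonoid M] (F : Finset (Fin 2) → M) :
    ∑ e0 : Finset (Fin 2), F e0 = F ∅ + (F {0} + (F {1} + F ({0, 1} : Finset (Fin 2)))) := by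
  have h : (Finset.univ : Finset (Finset (Fin 2)))
      = {∅, {0}, {1}, ({0, 1} : Finset (Fin 2))} := by decide
  rw [h, Finset.sum_insert (by decide), Finset.sum_insert (by decide),
    Finset.sum_insert (by decide), Finset.sum_singleton]

lemma total' {n : ℕ} (v : Fin n → ZMod 4) (k : ℕ) :
    ∑ s ∈ Finset.powersetCard k (Finset.univ : Finset (Fin (n + 1) × Fin 2)),
        ((Jchar (Dv v) s : ℤ) : ℤi) ^ 2
    = (if k = 0 then (16 : ℤi) ^ n else 0)
      + ((if k = 1 + ∑ i, kap (v i) then (16 : ℤi) ^ n else 0)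
      + ((if k = 1 + ∑ i, kap (v i) then (16 : ℤi) ^ n else 0)
      + (if k = 2 + ∑ i, kap2 ({0, 1} : Finset (Fin 2)) (v i) then (16 : ℤi) ^ n else 0))) := by
  rw [total v k,
    sum_finset_fin2 (fun e0 => if k = e0.card + ∑ i, kap2 e0 (v i) then (16 : ℤi) ^ n else 0)]
  have e1 : (∅ : Finset (Fin 2)).card = 0 := rfl
  have e2 : ({0} : Finset (Fin 2)).card = 1 := rfl
  have e3 : ({1} : Finset (Fin 2)).card = 1 := rfl
  have e4 : (({0, 1} : Finset (Fin 2))).card = 2 := rfl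
  simp only [e1, e2, e3, e4, kap2_empty, kap2_s0, kap2_s1, Finset.sum_const_zero,
    add_zero, zero_add]

lemma totalZ {n : ℕ} (v : Fin n → ZMod 4) (k : ℕ) :
    ∑ s ∈ Finset.powersetCard k (Finset.univ : Finset (Fin (n + 1) × Fin 2)),
        (Jchar (Dv v) s) ^ 2
    = ((if k = 0 then 1 else 0)
      + ((if k = 1 + ∑ i, kap (v i) then 1 else 0)
      + ((if k = 1 + ∑ i, kap (v i) then 1 else 0)
      + (if k = 2 + ∑ i, kap2 ({0, 1} : Finset (Fin 2)) (v i) then (1 : ℤ) else 0)))) * 16 ^ n := by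
  have hinj : Function.Injective (Int.cast : ℤ → ℤi) := Int.cast_injective
  apply hinj
  push_cast
  rw [total' v k]
  split_ifs <;> push_cast <;> ring

lemma sum_kap {n : ℕ} (v : Fin n → ZMod 4) :
    ∑ i, kap (v i) = freq v 1 + 2 * freq v 2 + freq v 3 := by
  simp only [kap_split]
  rw [Finset.sum_add_distrib, Finset.sum_add_distrib, ← Finset.mul_sum]
  simp only [freq, Finset.card_filter]

lemma sum_kap2u {n : ℕ} (v : Fin n → ZMod 4) :
    ∑ i, kap2 ({0, 1} : Finset (Fin 2)) (v i) = 2 * freq v 1 + 2 * freq v 3 := by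
  simp only [kap2u_split]
  rw [Finset.sum_add_distrib, ← Finset.mul_sum, ← Finset.mul_sum]
  simp only [freq, Finset.card_filter]

lemma apat {n : ℕ} (v : Fin n → ZMod 4) (k : ℕ) :
    Apattern (Dv v) k
    = (((if k = 0 then 1 else 0)
      + ((if k = 1 + ∑ i, kap (v i) then 1 else 0)
      + ((if k = 1 + ∑ i, kap (v i) then 1 else 0)
      + (if k = 2 + ∑ i, kap2 ({0, 1} : Finset (Fin 2)) (v i) then (1 : ℚ) else 0)))) : ℚ) := by
  have hN : (Fintype.card (Fin n → ZMod 4) : ℚ) = 4 ^ n := by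
    rw [Fintype.card_fun]
    simp [ZMod.card]
  have h16 : ((4 : ℚ) ^ n) ^ 2 = 16 ^ n := by
    rw [← pow_mul, mul_comm, pow_mul]
    norm_num
  have h0 : ((16 : ℚ) ^ n) ≠ 0 := by positivity
  have step : Apattern (Dv v) k
      = (∑ s ∈ Finset.powersetCard k (Finset.univ : Finset (Fin (n + 1) × Fin 2)),
          ((Jchar (Dv v) s : ℚ)) ^ 2) / 16 ^ n := by
    rw [Apattern, Finset.sum_div]
    refine Finset.sum_congr rfl fun s _ => ?_
    rw [rho, div_pow, sq_abs, hN, h16]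
  rw [step]
  have hZ := totalZ v k
  have : (∑ s ∈ Finset.powersetCard k (Finset.univ : Finset (Fin (n + 1) × Fin 2)),
      ((Jchar (Dv v) s : ℚ)) ^ 2)
      = (((if k = 0 then 1 else 0)
      + ((if k = 1 + ∑ i, kap (v i) then 1 else 0)
      + ((if k = 1 + ∑ i, kap (v i) then 1 else 0)
      + (if k = 2 + ∑ i, kap2 ({0, 1} : Finset (Fin 2)) (v i) then (1 : ℚ) else 0)))) : ℚ)
        * 16 ^ n := by
    have := congrArg (fun z : ℤ => (z : ℚ)) hZ
    push_cast at this
    rw [this]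
  rw [this, mul_div_assoc, div_self h0, mul_one]

/-- Corollary 3: the generalized wordlength pattern of `D`. If `k₁ ≠ k₂`
then `A_{k₁} = 2`, `A_{k₂} = 1` and all other `A_i = 0` (`i ≥ 1`); if `k₁ = k₂ = k` then
`A_k = 3` and `A_i = 0` for `i ≠ k` (`i ≥ 1`). -/
theorem statement7 (n : ℕ) (v : Fin n → ZMod 4)
    (f1 f2 f3 : ℕ) (h1 : f1 = freq v 1) (h2 : f2 = freq v 2) (h3 : f3 = freq v 3)
    (k1 k2 : ℕ) (hk1 : k1 = f1 + 2 * f2 + f3 + 1) (hk2 : k2 = 2 * f1 + 2 * f3 + 2) :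
    (k1 ≠ k2 →
      Apattern (Dv v) k1 = 2 ∧ Apattern (Dv v) k2 = 1 ∧
      ∀ i : ℕ, 1 ≤ i → i ≠ k1 → i ≠ k2 → Apattern (Dv v) i = 0) ∧
    (k1 = k2 →
      Apattern (Dv v) k1 = 3 ∧
      ∀ i : ℕ, 1 ≤ i → i ≠ k1 → Apattern (Dv v) i = 0) := by
  have hK1 : 1 + ∑ i, kap (v i) = k1 := by
    rw [sum_kap, hk1, h1, h2, h3]; ring
  have hK2 : 2 + ∑ i, kap2 ({0, 1} : Finset (Fin 2)) (v i) = k2 := by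
    rw [sum_kap2u, hk2, h1, h3]; ring
  have hk1pos : k1 ≠ 0 := by omega
  have hk2pos : k2 ≠ 0 := by omega
  have hA : ∀ k : ℕ, Apattern (Dv v) k =
      (if k = 0 then 1 else 0)
      + ((if k = k1 then 1 else 0)
      + ((if k = k1 then 1 else 0) + (if k = k2 then (1 : ℚ) else 0))) := by
    intro k; rw [apat v k, hK1, hK2]
  constructor
  · intro hne
    refine ⟨?_, ?_, ?_⟩
    · rw [hA k1]; simp [hk1pos, hne]; norm_num
    · rw [hA k2]; simp [hk2pos, Ne.symm hne]
    · intro i h1i hik1 hik2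
      rw [hA i]; simp [Nat.one_le_iff_ne_zero.mp h1i, hik1, hik2]
  · intro heq
    refine ⟨?_, ?_⟩
    · rw [hA k1]; simp [hk1pos, heq, hk2pos]; norm_num
    · intro i h1i hik1
      rw [hA i]
      have hik2 : i ≠ k2 := fun h => hik1 (h.trans heq.symm)
      simp [Nat.one_le_iff_ne_zero.mp h1i, hik1, hik2]
end

section
/- Let D be the 2^{2n} × (2n+2) design generated from G = (v, I_n) with f_i occurrences of i in v. If f_2 > 0 then the projectivity of D is exactly 2(f_1 + f_3) + 1; if f_2 = 0 and f_1 + f_3 > 0 then the projectivity of D is exactly 2(f_1 + f_3) − 1. -/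
open Finset

----------------------------------------------------------------
-- auxiliary

lemma fin2cases (c : Fin 2) : c = 0 ∨ c = 1 := by revert c; decide

def graySolve (a b : ℤ) : ZMod 4 :=
  if a = 1 then (if b = 1 then 0 else 1) else (if b = 1 then 3 else 2)

lemma graySolve_spec {a b : ℤ} (ha : a = 1 ∨ a = -1) (hb : b = 1 ∨ b = -1) :
    gray (graySolve a b) 0 = a ∧ gray (graySolve a b) 1 = b := by
  rcases ha with rfl | rfl <;> rcases hb with rfl | rfl <;> exact ⟨rfl, rfl⟩

def flipc (c : Fin 2) (x : ZMod 4) : ZMod 4 := if c = 0 then -1 - x else 1 - x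

lemma gray_flipc_ne (c c' : Fin 2) (h : c ≠ c') (x : ZMod 4) :
    gray (flipc c x) c' = gray x c' := by revert c c' x; decide

lemma flip_shift_odd {vv : ZMod 4} (hv : vv = 1 ∨ vv = 3) (c : Fin 2) (x : ZMod 4) :
    (flipc c x - x) * vv = 1 ∨ (flipc c x - x) * vv = 3 := by
  rcases hv with rfl | rfl <;> revert c x <;> decide

lemma flip_shift_two (c : Fin 2) (x : ZMod 4) : (flipc c x - x) * 2 = 2 := by
  revert c x; decide

lemma vv_sq {vv : ZMod 4} (hv : vv = 1 ∨ vv = 3) : vv * vv = 1 := by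
  rcases hv with rfl | rfl <;> decide

section core
variable {n : ℕ} (v : Fin n → ZMod 4) (s : Finset (Fin (n + 1) × Fin 2))
  (ε : Fin (n + 1) × Fin 2 → ℤ)

def Ok (u : Fin n → ZMod 4) : Prop :=
  ∀ (j : Fin n) (c : Fin 2), (j.succ, c) ∈ s → gray (u j) c = ε (j.succ, c)

def baseRow : Fin n → ZMod 4 := fun j => graySolve (ε (j.succ, 0)) (ε (j.succ, 1))

lemma ok_base (hε : ∀ q, ε q = 1 ∨ ε q = -1) : Ok s ε (baseRow ε) := by
  intro j c _
  rcases fin2cases c with rfl | rfl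
  · exact (graySolve_spec (hε _) (hε _)).1
  · exact (graySolve_spec (hε _) (hε _)).2

lemma ok_update {u : Fin n → ZMod 4} (hu : Ok s ε u) (j : Fin n) (x : ZMod 4)
    (hx : ∀ c : Fin 2, (j.succ, c) ∈ s → gray x c = ε (j.succ, c)) :
    Ok s ε (Function.update u j x) := by
  intro j' c h
  rcases eq_or_ne j' j with rfl | hne
  · rw [Function.update_self]; exact hx c h
  · rw [Function.update_of_ne hne]; exact hu j' c h

lemma flip_ok_val {j : Fin n} {y : ZMod 4}
    (hy : ∀ c : Fin 2, (j.succ, c) ∈ s → gray y c = ε (j.succ, c))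
    {cf : Fin 2} (hf : (j.succ, cf) ∉ s) (b : Bool) :
    ∀ c : Fin 2, (j.succ, c) ∈ s → gray (cond b (flipc cf y) y) c = ε (j.succ, c) := by
  intro c hc
  cases b
  · exact hy c hc
  · have hcc : cf ≠ c := by rintro rfl; exact hf hc
    simpa using (gray_flipc_ne _ _ hcc y).trans (hy c hc)

lemma sum_update (u : Fin n → ZMod 4) (j : Fin n) (x : ZMod 4) :
    ∑ i, Function.update u j x i * v i = (∑ i, u i * v i) + (x - u j) * v j := by
  have h : ∀ i, Function.update u j x i * v i
      = Function.update (fun i => u i * v i) j (x * v j) i := by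
    intro i
    rcases eq_or_ne i j with rfl | h
    · simp
    · simp [Function.update_of_ne h]
  rw [Finset.sum_congr rfl (fun i _ => h i),
    Finset.sum_update_of_mem (Finset.mem_univ j),
    Finset.sum_sdiff_eq_sub (Finset.singleton_subset_iff.2 (Finset.mem_univ j))]
  simp
  ring

end core

-- decidable combination facts
lemma D1 (d1 w0 t : ZMod 4) (h : d1 = 1 ∨ d1 = 3) :
    ∃ b1 b2 : Bool, w0 + (cond b1 d1 0) + (cond b2 2 0) = t := by
  revert w0 t; rcases h with rfl | rfl <;> decide

lemma D2 (d1 d2 d3 w0 t : ZMod 4) (h1 : d1 = 1 ∨ d1 = 3) (h2 : d2 = 1 ∨ d2 = 3)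
    (h3 : d3 = 1 ∨ d3 = 3) :
    ∃ b1 b2 b3 : Bool, w0 + (cond b1 d1 0) + (cond b2 d2 0) + (cond b3 d3 0) = t := by
  revert w0 t; rcases h1 with rfl | rfl <;> rcases h2 with rfl | rfl <;>
    rcases h3 with rfl | rfl <;> decide

lemma D4 (d1 d2 w0 : ZMod 4) (h1 : d1 = 1 ∨ d1 = 3) (h2 : d2 = 1 ∨ d2 = 3)
    (c : Fin 2) (e : ℤ) (he : e = 1 ∨ e = -1) :
    ∃ b1 b2 : Bool, gray (w0 + (cond b1 d1 0) + (cond b2 d2 0)) c = e := by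
  revert w0 c; rcases h1 with rfl | rfl <;> rcases h2 with rfl | rfl <;>
    rcases he with rfl | rfl <;> decide

lemma D5 (w0 : ZMod 4) (c : Fin 2) (e : ℤ) (he : e = 1 ∨ e = -1) :
    ∃ b : Bool, gray (w0 + cond b 2 0) c = e := by
  revert w0 c; rcases he with rfl | rfl <;> decide

section realize
variable {n : ℕ} (v : Fin n → ZMod 4) (s : Finset (Fin (n + 1) × Fin 2))
  (ε : Fin (n + 1) × Fin 2 → ℤ) (hε : ∀ q, ε q = 1 ∨ ε q = -1)
include hε

lemma exact_full {j : Fin n} (hv : v j = 1 ∨ v j = 3)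
    (h0 : (j.succ, (0 : Fin 2)) ∉ s) (h1 : (j.succ, (1 : Fin 2)) ∉ s) (t : ZMod 4) :
    ∃ u, Ok s ε u ∧ ∑ i, u i * v i = t := by
  set u0 := baseRow ε with hu0
  set w0 := ∑ i, u0 i * v i with hw0
  refine ⟨Function.update u0 j (u0 j + (t - w0) * v j), ?_, ?_⟩
  · refine ok_update s ε (ok_base s ε hε) j _ ?_
    intro c hc
    rcases fin2cases c with rfl | rfl
    · exact absurd hc h0
    · exact absurd hc h1
  · rw [sum_update, ← hw0, add_sub_cancel_left, mul_assoc, vv_sq hv, mul_one]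
    ring

lemma exact_one_two {j1 j2 : Fin n} {c1 c2 : Fin 2}
    (hv1 : v j1 = 1 ∨ v j1 = 3) (hf1 : (j1.succ, c1) ∉ s)
    (hv2 : v j2 = 2) (hf2 : (j2.succ, c2) ∉ s) (t : ZMod 4) :
    ∃ u, Ok s ε u ∧ ∑ i, u i * v i = t := by
  have hne : j1 ≠ j2 := by
    rintro rfl; rcases hv1 with h | h <;> rw [hv2] at h <;> exact absurd h (by decide)
  set u0 := baseRow ε with hu0
  set w0 := ∑ i, u0 i * v i with hw0
  set d1 := (flipc c1 (u0 j1) - u0 j1) * v j1 with hd1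
  obtain ⟨b1, b2, hb⟩ := D1 d1 w0 t (flip_shift_odd hv1 c1 (u0 j1))
  set x1 := cond b1 (flipc c1 (u0 j1)) (u0 j1) with hx1
  set x2 := cond b2 (flipc c2 (u0 j2)) (u0 j2) with hx2
  refine ⟨Function.update (Function.update u0 j2 x2) j1 x1, ?_, ?_⟩
  · refine ok_update s ε (ok_update s ε (ok_base s ε hε) j2 x2 ?_) j1 x1 ?_
    · exact flip_ok_val s ε (fun c hc => ok_base s ε hε j2 c hc) hf2 b2
    · exact flip_ok_val s ε (fun c hc => ok_base s ε hε j1 c hc) hf1 b1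
  · rw [sum_update, sum_update, Function.update_of_ne hne, ← hw0]
    have e2 : (x2 - u0 j2) * v j2 = cond b2 2 0 := by
      cases b2
      · simp [hx2]
      · simp only [hx2, cond]; rw [hv2, flip_shift_two]
    have e1 : (x1 - u0 j1) * v j1 = cond b1 d1 0 := by
      cases b1
      · simp [hx1]
      · simp [hx1, hd1]
    rw [e1, e2]
    linear_combination hb

lemma exact_three {j1 j2 j3 : Fin n} {c1 c2 c3 : Fin 2}
    (hv1 : v j1 = 1 ∨ v j1 = 3) (hf1 : (j1.succ, c1) ∉ s)
    (hv2 : v j2 = 1 ∨ v j2 = 3) (hf2 : (j2.succ, c2) ∉ s)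
    (hv3 : v j3 = 1 ∨ v j3 = 3) (hf3 : (j3.succ, c3) ∉ s)
    (h12 : j1 ≠ j2) (h13 : j1 ≠ j3) (h23 : j2 ≠ j3) (t : ZMod 4) :
    ∃ u, Ok s ε u ∧ ∑ i, u i * v i = t := by
  set u0 := baseRow ε with hu0
  set w0 := ∑ i, u0 i * v i with hw0
  set d1 := (flipc c1 (u0 j1) - u0 j1) * v j1 with hd1
  set d2 := (flipc c2 (u0 j2) - u0 j2) * v j2 with hd2
  set d3 := (flipc c3 (u0 j3) - u0 j3) * v j3 with hd3
  obtain ⟨b1, b2, b3, hb⟩ := D2 d1 d2 d3 w0 t (flip_shift_odd hv1 c1 (u0 j1))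
    (flip_shift_odd hv2 c2 (u0 j2)) (flip_shift_odd hv3 c3 (u0 j3))
  set x1 := cond b1 (flipc c1 (u0 j1)) (u0 j1) with hx1
  set x2 := cond b2 (flipc c2 (u0 j2)) (u0 j2) with hx2
  set x3 := cond b3 (flipc c3 (u0 j3)) (u0 j3) with hx3
  refine ⟨Function.update (Function.update (Function.update u0 j3 x3) j2 x2) j1 x1, ?_, ?_⟩
  · refine ok_update s ε (ok_update s ε (ok_update s ε (ok_base s ε hε) j3 x3 ?_) j2 x2 ?_)
      j1 x1 ?_
    · exact flip_ok_val s ε (fun c hc => ok_base s ε hε j3 c hc) hf3 b3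
    · exact flip_ok_val s ε (fun c hc => ok_base s ε hε j2 c hc) hf2 b2
    · exact flip_ok_val s ε (fun c hc => ok_base s ε hε j1 c hc) hf1 b1
  · rw [sum_update, sum_update, sum_update,
      Function.update_of_ne h23, Function.update_of_ne h12,
      Function.update_of_ne h13, ← hw0]
    have e1 : (x1 - u0 j1) * v j1 = cond b1 d1 0 := by
      cases b1 <;> simp [hx1, hd1]
    have e2 : (x2 - u0 j2) * v j2 = cond b2 d2 0 := by
      cases b2 <;> simp [hx2, hd2]
    have e3 : (x3 - u0 j3) * v j3 = cond b3 d3 0 := by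
      cases b3 <;> simp [hx3, hd3]
    rw [e1, e2, e3]
    linear_combination hb

lemma pair_two {j1 j2 : Fin n} {c1 c2 : Fin 2}
    (hv1 : v j1 = 1 ∨ v j1 = 3) (hf1 : (j1.succ, c1) ∉ s)
    (hv2 : v j2 = 1 ∨ v j2 = 3) (hf2 : (j2.succ, c2) ∉ s)
    (h12 : j1 ≠ j2) (c : Fin 2) (e : ℤ) (he : e = 1 ∨ e = -1) :
    ∃ u, Ok s ε u ∧ gray (∑ i, u i * v i) c = e := by
  set u0 := baseRow ε with hu0
  set w0 := ∑ i, u0 i * v i with hw0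
  set d1 := (flipc c1 (u0 j1) - u0 j1) * v j1 with hd1
  set d2 := (flipc c2 (u0 j2) - u0 j2) * v j2 with hd2
  obtain ⟨b1, b2, hb⟩ := D4 d1 d2 w0 (flip_shift_odd hv1 c1 (u0 j1))
    (flip_shift_odd hv2 c2 (u0 j2)) c e he
  set x1 := cond b1 (flipc c1 (u0 j1)) (u0 j1) with hx1
  set x2 := cond b2 (flipc c2 (u0 j2)) (u0 j2) with hx2
  refine ⟨Function.update (Function.update u0 j2 x2) j1 x1, ?_, ?_⟩
  · refine ok_update s ε (ok_update s ε (ok_base s ε hε) j2 x2 ?_) j1 x1 ?_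
    · exact flip_ok_val s ε (fun c hc => ok_base s ε hε j2 c hc) hf2 b2
    · exact flip_ok_val s ε (fun c hc => ok_base s ε hε j1 c hc) hf1 b1
  · rw [sum_update, sum_update, Function.update_of_ne h12, ← hw0]
    have e1 : (x1 - u0 j1) * v j1 = cond b1 d1 0 := by
      cases b1 <;> simp [hx1, hd1]
    have e2 : (x2 - u0 j2) * v j2 = cond b2 d2 0 := by
      cases b2 <;> simp [hx2, hd2]
    rw [e1, e2]
    rw [show w0 + cond b2 d2 0 + cond b1 d1 0 = w0 + cond b1 d1 0 + cond b2 d2 0 by ring]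
    exact hb

lemma pair_flip2 {j2 : Fin n} {c2 : Fin 2}
    (hv2 : v j2 = 2) (hf2 : (j2.succ, c2) ∉ s) (c : Fin 2) (e : ℤ) (he : e = 1 ∨ e = -1) :
    ∃ u, Ok s ε u ∧ gray (∑ i, u i * v i) c = e := by
  set u0 := baseRow ε with hu0
  set w0 := ∑ i, u0 i * v i with hw0
  obtain ⟨b, hb⟩ := D5 w0 c e he
  set x2 := cond b (flipc c2 (u0 j2)) (u0 j2) with hx2
  refine ⟨Function.update u0 j2 x2, ?_, ?_⟩
  · exact ok_update s ε (ok_base s ε hε) j2 x2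
      (flip_ok_val s ε (fun c hc => ok_base s ε hε j2 c hc) hf2 b)
  · rw [sum_update, ← hw0]
    have e2 : (x2 - u0 j2) * v j2 = cond b 2 0 := by
      cases b
      · simp [hx2]
      · simp only [hx2, cond]; rw [hv2, flip_shift_two]
    rw [e2]
    exact hb

end realize

section counting
variable {n : ℕ} (v : Fin n → ZMod 4) (s : Finset (Fin (n + 1) × Fin 2))

def freeOdd : Finset (Fin n × Fin 2) :=
  ((univ.filter fun i => v i = 1 ∨ v i = 3) ×ˢ univ).filter fun p => (p.1.succ, p.2) ∉ s

def freeTwo : Finset (Fin n × Fin 2) :=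
  ((univ.filter fun i => v i = 2) ×ˢ univ).filter fun p => (p.1.succ, p.2) ∉ s

lemma mem_freeOdd {p : Fin n × Fin 2} (hp : p ∈ freeOdd v s) :
    (v p.1 = 1 ∨ v p.1 = 3) ∧ (p.1.succ, p.2) ∉ s := by
  simp only [freeOdd, Finset.mem_filter, Finset.mem_product, Finset.mem_univ] at hp
  exact ⟨hp.1.1.2, hp.2⟩

lemma mem_freeTwo {p : Fin n × Fin 2} (hp : p ∈ freeTwo v s) :
    v p.1 = 2 ∧ (p.1.succ, p.2) ∉ s := by
  simp only [freeTwo, Finset.mem_filter, Finset.mem_product, Finset.mem_univ] at hp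
  exact ⟨hp.1.1.2, hp.2⟩

lemma card_oddCols :
    ((univ.filter fun i => v i = 1 ∨ v i = 3) ×ˢ (univ : Finset (Fin 2))).card
      = 2 * (freq v 1 + freq v 3) := by
  rw [Finset.card_product, Finset.filter_or,
    Finset.card_union_of_disjoint]
  · simp [freq]; ring
  · rw [Finset.disjoint_left]
    intro a ha hb
    simp only [Finset.mem_filter] at ha hb
    rw [ha.2] at hb
    exact absurd hb.2 (by decide)

lemma card_twoCols :
    ((univ.filter fun i => v i = 2) ×ˢ (univ : Finset (Fin 2))).card = 2 * freq v 2 := by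
  rw [Finset.card_product]
  simp [freq]; ring

-- the embedding of row-columns into design columns
lemma card_filter_le (A : Finset (Fin n × Fin 2)) :
    (A.filter fun p => (p.1.succ, p.2) ∈ s).card ≤ (s.filter fun q => ¬ q.1 = 0).card := by
  have hinj : Function.Injective (fun p : Fin n × Fin 2 => ((p.1.succ, p.2) : Fin (n+1) × Fin 2)) := by
    intro p q h
    simp only [Prod.mk.injEq] at h
    exact Prod.ext (Fin.succ_injective n h.1) h.2
  calc (A.filter fun p => (p.1.succ, p.2) ∈ s).card
      = ((A.filter fun p => (p.1.succ, p.2) ∈ s).image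
          (fun p : Fin n × Fin 2 => ((p.1.succ, p.2) : Fin (n+1) × Fin 2))).card := by
        rw [Finset.card_image_of_injective _ hinj]
    _ ≤ (s.filter fun q => ¬ q.1 = 0).card := by
        apply Finset.card_le_card
        intro q hq
        simp only [Finset.mem_image, Finset.mem_filter] at hq ⊢
        obtain ⟨p, hp, rfl⟩ := hq
        exact ⟨hp.2, Fin.succ_ne_zero _⟩

lemma count_FO :
    2 * (freq v 1 + freq v 3)
      ≤ (freeOdd v s).card + (s.filter fun q => ¬ q.1 = 0).card := by
  have h2 := card_oddCols v
  have hsplit := Finset.card_filter_add_card_filter_not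
    (s := (univ.filter fun i => v i = 1 ∨ v i = 3) ×ˢ (univ : Finset (Fin 2)))
    (p := fun p => (p.1.succ, p.2) ∈ s)
  have h1 := card_filter_le s ((univ.filter fun i => v i = 1 ∨ v i = 3) ×ˢ univ)
  have h3 : (freeOdd v s).card
      = (((univ.filter fun i => v i = 1 ∨ v i = 3) ×ˢ (univ : Finset (Fin 2))).filter
          fun p => ¬ (p.1.succ, p.2) ∈ s).card := rfl
  omega

lemma count_FOF2 :
    2 * (freq v 1 + freq v 3) + 2 * freq v 2
      ≤ (freeOdd v s).card + (freeTwo v s).card + (s.filter fun q => ¬ q.1 = 0).card := by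
  have hdisj : Disjoint ((univ.filter fun i => v i = 1 ∨ v i = 3) ×ˢ (univ : Finset (Fin 2)))
      ((univ.filter fun i => v i = 2) ×ˢ (univ : Finset (Fin 2))) := by
    rw [Finset.disjoint_left]
    intro p hp hq
    simp only [Finset.mem_product, Finset.mem_filter] at hp hq
    rcases hp.1.2 with h | h <;> rw [hq.1.2] at h <;> exact absurd h (by decide)
  have hU : (((univ.filter fun i => v i = 1 ∨ v i = 3) ×ˢ (univ : Finset (Fin 2)))
      ∪ ((univ.filter fun i => v i = 2) ×ˢ (univ : Finset (Fin 2)))).card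
      = 2 * (freq v 1 + freq v 3) + 2 * freq v 2 := by
    rw [Finset.card_union_of_disjoint hdisj, card_oddCols, card_twoCols]
  have hsplit := Finset.card_filter_add_card_filter_not
    (s := ((univ.filter fun i => v i = 1 ∨ v i = 3) ×ˢ (univ : Finset (Fin 2)))
      ∪ ((univ.filter fun i => v i = 2) ×ˢ (univ : Finset (Fin 2))))
    (p := fun p => (p.1.succ, p.2) ∈ s)
  have h1 := card_filter_le s (((univ.filter fun i => v i = 1 ∨ v i = 3) ×ˢ (univ : Finset (Fin 2)))
      ∪ ((univ.filter fun i => v i = 2) ×ˢ (univ : Finset (Fin 2))))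
  have hneg : ((((univ.filter fun i => v i = 1 ∨ v i = 3) ×ˢ (univ : Finset (Fin 2)))
      ∪ ((univ.filter fun i => v i = 2) ×ˢ (univ : Finset (Fin 2)))).filter
        fun p => ¬ (p.1.succ, p.2) ∈ s).card
      = (freeOdd v s).card + (freeTwo v s).card := by
    rw [Finset.filter_union, Finset.card_union_of_disjoint
      (Finset.disjoint_filter_filter hdisj)]
    rfl
  omega

lemma count_split :
    (s.filter fun q => q.1 = 0).card + (s.filter fun q => ¬ q.1 = 0).card = s.card :=
  Finset.card_filter_add_card_filter_not _

lemma count_s0_le : (s.filter fun q => q.1 = 0).card ≤ 2 := by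
  calc (s.filter fun q => q.1 = 0).card
      ≤ ({((0 : Fin (n+1)), (0 : Fin 2)), ((0 : Fin (n+1)), (1 : Fin 2))} : Finset _).card := by
        apply Finset.card_le_card
        intro q hq
        simp only [Finset.mem_filter] at hq
        obtain ⟨q1, q2⟩ := q
        simp only at hq
        rcases hq.2 with rfl
        rcases fin2cases q2 with rfl | rfl <;> simp
    _ ≤ 2 := Finset.card_le_two

lemma count_both (h0 : ((0 : Fin (n+1)), (0 : Fin 2)) ∈ s)
    (h1 : ((0 : Fin (n+1)), (1 : Fin 2)) ∈ s) :
    2 ≤ (s.filter fun q => q.1 = 0).card := by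
  have : ({((0 : Fin (n+1)), (0 : Fin 2)), ((0 : Fin (n+1)), (1 : Fin 2))} : Finset _)
      ⊆ s.filter fun q => q.1 = 0 := by
    intro q hq
    simp only [Finset.mem_insert, Finset.mem_singleton] at hq
    rw [Finset.mem_filter]
    rcases hq with rfl | rfl
    · exact ⟨h0, rfl⟩
    · exact ⟨h1, rfl⟩
  have hne : ((0 : Fin (n+1)), (0 : Fin 2)) ≠ ((0 : Fin (n+1)), (1 : Fin 2)) := by
    intro hh
    rw [Prod.mk.injEq] at hh
    exact absurd hh.2 (by decide)
  calc 2 = ({((0 : Fin (n+1)), (0 : Fin 2)), ((0 : Fin (n+1)), (1 : Fin 2))} : Finset _).card := by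
        rw [Finset.card_pair hne]
    _ ≤ _ := Finset.card_le_card this

lemma count_one {c : Fin 2} (h0 : ((0 : Fin (n+1)), c) ∈ s) :
    1 ≤ (s.filter fun q => q.1 = 0).card := by
  apply Finset.card_pos.mpr
  exact ⟨((0 : Fin (n+1)), c), Finset.mem_filter.mpr ⟨h0, rfl⟩⟩

end counting

-- extraction
lemma extract2 {α : Type*} {F : Finset α} (h : 2 ≤ F.card) :
    ∃ p ∈ F, ∃ q ∈ F, p ≠ q := Finset.one_lt_card.mp (by omega)

lemma extract3 {α : Type*} [DecidableEq α] {F : Finset α} (h : 3 ≤ F.card) :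
    ∃ p ∈ F, ∃ q ∈ F, ∃ r ∈ F, p ≠ q ∧ p ≠ r ∧ q ≠ r := by
  obtain ⟨p, hp⟩ := (Finset.card_pos (s := F)).mp (by omega)
  have h2 : 2 ≤ (F.erase p).card := by
    have := Finset.card_erase_of_mem hp; omega
  obtain ⟨q, hq, r, hr, hqr⟩ := extract2 h2
  exact ⟨p, hp, q, Finset.mem_of_mem_erase hq, r, Finset.mem_of_mem_erase hr,
    (Finset.ne_of_mem_erase hq).symm, (Finset.ne_of_mem_erase hr).symm, hqr⟩

lemma both_free {n : ℕ} {s : Finset (Fin (n+1) × Fin 2)} {j : Fin n} {c c' : Fin 2}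
    (h : c ≠ c') (hc : (j.succ, c) ∉ s) (hc' : (j.succ, c') ∉ s) :
    (j.succ, (0 : Fin 2)) ∉ s ∧ (j.succ, (1 : Fin 2)) ∉ s := by
  rcases fin2cases c with rfl | rfl <;> rcases fin2cases c' with rfl | rfl
  · exact absurd rfl h
  · exact ⟨hc, hc'⟩
  · exact ⟨hc', hc⟩
  · exact absurd rfl h

section lower
variable {n : ℕ} (v : Fin n → ZMod 4) (s : Finset (Fin (n + 1) × Fin 2))
  (ε : Fin (n + 1) × Fin 2 → ℤ) (hε : ∀ q, ε q = 1 ∨ ε q = -1)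
include hε

lemma realize_exact
    (H : (1 ≤ (freeOdd v s).card ∧ 1 ≤ (freeTwo v s).card) ∨ 3 ≤ (freeOdd v s).card)
    (t : ZMod 4) : ∃ u, Ok s ε u ∧ ∑ i, u i * v i = t := by
  rcases H with ⟨hFO, hF2⟩ | hFO3
  · obtain ⟨p, hp⟩ := (Finset.card_pos (s := freeOdd v s)).mp (by omega)
    obtain ⟨q, hq⟩ := (Finset.card_pos (s := freeTwo v s)).mp (by omega)
    obtain ⟨hv1, hf1⟩ := mem_freeOdd v s hp
    obtain ⟨hv2, hf2⟩ := mem_freeTwo v s hq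
    exact exact_one_two v s ε hε hv1 hf1 hv2 hf2 t
  · obtain ⟨p, hp, q, hq, r, hr, hpq, hpr, hqr⟩ := extract3 hFO3
    obtain ⟨hvp, hfp⟩ := mem_freeOdd v s hp
    obtain ⟨hvq, hfq⟩ := mem_freeOdd v s hq
    obtain ⟨hvr, hfr⟩ := mem_freeOdd v s hr
    by_cases h1 : p.1 = q.1
    · have h2 : p.2 ≠ q.2 := fun h => hpq (Prod.ext h1 h)
      rw [← h1] at hfq
      obtain ⟨ha, hb⟩ := both_free h2 hfp hfq
      exact exact_full v s ε hε hvp ha hb t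
    · by_cases h2 : p.1 = r.1
      · have h3 : p.2 ≠ r.2 := fun h => hpr (Prod.ext h2 h)
        rw [← h2] at hfr
        obtain ⟨ha, hb⟩ := both_free h3 hfp hfr
        exact exact_full v s ε hε hvp ha hb t
      · by_cases h3 : q.1 = r.1
        · have h4 : q.2 ≠ r.2 := fun h => hqr (Prod.ext h3 h)
          rw [← h3] at hfr
          obtain ⟨ha, hb⟩ := both_free h4 hfq hfr
          exact exact_full v s ε hε hvq ha hb t
        · exact exact_three v s ε hε hvp hfp hvq hfq hvr hfr h1 h2 h3 t

lemma realize_pair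
    (H : 2 ≤ (freeOdd v s).card ∨ 1 ≤ (freeTwo v s).card)
    (c : Fin 2) (e : ℤ) (he : e = 1 ∨ e = -1) :
    ∃ u, Ok s ε u ∧ gray (∑ i, u i * v i) c = e := by
  rcases H with hFO | hF2
  · obtain ⟨p, hp, q, hq, hpq⟩ := extract2 hFO
    obtain ⟨hvp, hfp⟩ := mem_freeOdd v s hp
    obtain ⟨hvq, hfq⟩ := mem_freeOdd v s hq
    by_cases h1 : p.1 = q.1
    · have h2 : p.2 ≠ q.2 := fun h => hpq (Prod.ext h1 h)
      rw [← h1] at hfq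
      obtain ⟨ha, hb⟩ := both_free h2 hfp hfq
      obtain ⟨u, hu, hsum⟩ := exact_full v s ε hε hvp ha hb
          (if c = 0 then graySolve e 1 else graySolve 1 e)
      refine ⟨u, hu, ?_⟩
      rw [hsum]
      rcases fin2cases c with rfl | rfl
      · simpa using (graySolve_spec he (Or.inl rfl)).1
      · simpa using (graySolve_spec (Or.inl rfl) he).2
    · exact pair_two v s ε hε hvp hfp hvq hfq h1 c e he
  · obtain ⟨q, hq⟩ := (Finset.card_pos (s := freeTwo v s)).mp (by omega)
    obtain ⟨hv2, hf2⟩ := mem_freeTwo v s hq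
    exact pair_flip2 v s ε hε hv2 hf2 c e he

lemma lower
    (hBoth : ((0 : Fin (n+1)), (0 : Fin 2)) ∈ s → ((0 : Fin (n+1)), (1 : Fin 2)) ∈ s →
      (1 ≤ (freeOdd v s).card ∧ 1 ≤ (freeTwo v s).card) ∨ 3 ≤ (freeOdd v s).card)
    (hOne : (((0 : Fin (n+1)), (0 : Fin 2)) ∈ s ∨ ((0 : Fin (n+1)), (1 : Fin 2)) ∈ s) →
      2 ≤ (freeOdd v s).card ∨ 1 ≤ (freeTwo v s).card) :
    ∃ u, ∀ q ∈ s, Dv v u q = ε q := by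
  have glue : ∀ u : Fin n → ZMod 4, Ok s ε u →
      (∀ c : Fin 2, ((0 : Fin (n+1)), c) ∈ s → gray (∑ i, u i * v i) c = ε (0, c)) →
      ∀ q ∈ s, Dv v u q = ε q := by
    intro u hok h0
    rintro ⟨j, c⟩ hq
    induction j using Fin.cases with
    | zero => simpa [Dv] using h0 c hq
    | succ j => simpa [Dv] using hok j c hq
  by_cases h00 : ((0 : Fin (n+1)), (0 : Fin 2)) ∈ s
  · by_cases h01 : ((0 : Fin (n+1)), (1 : Fin 2)) ∈ s
    · obtain ⟨u, hu, hsum⟩ := realize_exact v s ε hε (hBoth h00 h01)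
        (graySolve (ε (0, 0)) (ε (0, 1)))
      refine ⟨u, glue u hu ?_⟩
      intro c hc
      rw [hsum]
      rcases fin2cases c with rfl | rfl
      · exact (graySolve_spec (hε _) (hε _)).1
      · exact (graySolve_spec (hε _) (hε _)).2
    · obtain ⟨u, hu, hg⟩ := realize_pair v s ε hε (hOne (Or.inl h00)) 0 (ε (0, 0)) (hε _)
      refine ⟨u, glue u hu ?_⟩
      intro c hc
      rcases fin2cases c with rfl | rfl
      · exact hg
      · exact absurd hc h01
  · by_cases h01 : ((0 : Fin (n+1)), (1 : Fin 2)) ∈ s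
    · obtain ⟨u, hu, hg⟩ := realize_pair v s ε hε (hOne (Or.inr h01)) 1 (ε (0, 1)) (hε _)
      refine ⟨u, glue u hu ?_⟩
      intro c hc
      rcases fin2cases c with rfl | rfl
      · exact absurd hc h00
      · exact hg
    · refine ⟨baseRow ε, glue _ (ok_base s ε hε) ?_⟩
      intro c hc
      rcases fin2cases c with rfl | rfl
      · exact absurd hc h00
      · exact absurd hc h01

end lower

-- handy evaluation lemmas
lemma dv0 {n : ℕ} (v : Fin n → ZMod 4) (u : Fin n → ZMod 4) (c : Fin 2) :
    Dv v u ((0 : Fin (n+1)), c) = gray (∑ i, u i * v i) c := by simp [Dv]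

lemma dvs {n : ℕ} (v : Fin n → ZMod 4) (u : Fin n → ZMod 4) (j : Fin n) (c : Fin 2) :
    Dv v u (j.succ, c) = gray (u j) c := by simp [Dv]

lemma card_oddI {n : ℕ} (v : Fin n → ZMod 4) :
    (univ.filter fun i => v i = 1 ∨ v i = 3).card = freq v 1 + freq v 3 := by
  rw [Finset.filter_or, Finset.card_union_of_disjoint]
  · rfl
  · rw [Finset.disjoint_left]
    intro a ha hb
    simp only [Finset.mem_filter] at ha hb
    rw [ha.2] at hb
    exact absurd hb.2 (by decide)

lemma no_two {n : ℕ} (v : Fin n → ZMod 4) (h : freq v 2 = 0) : ∀ i, v i ≠ 2 := by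
  intro i hi
  have : (univ.filter fun j => v j = 2) = ∅ := Finset.card_eq_zero.mp h
  have hm : i ∈ univ.filter fun j => v j = 2 := Finset.mem_filter.mpr ⟨Finset.mem_univ _, hi⟩
  rw [this] at hm
  exact absurd hm (Finset.notMem_empty i)

lemma zmod4_cases (z : ZMod 4) : z = 0 ∨ z = 1 ∨ z = 2 ∨ z = 3 := by revert z; decide

lemma upper_f2 {n : ℕ} (v : Fin n → ZMod 4) :
    ¬ hasProjectivity (Dv v) (2 * (freq v 1 + freq v 3) + 2) := by
  intro h
  classical
  have hinj : Function.Injective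
      (fun p : Fin n × Fin 2 => ((p.1.succ, p.2) : Fin (n+1) × Fin 2)) := by
    intro p q hpq
    simp only [Prod.mk.injEq] at hpq
    exact Prod.ext (Fin.succ_injective n hpq.1) hpq.2
  set A := ((univ.filter fun i => v i = 1 ∨ v i = 3) ×ˢ (univ : Finset (Fin 2))).image
      (fun p : Fin n × Fin 2 => ((p.1.succ, p.2) : Fin (n+1) × Fin 2)) with hA
  have hnotA : ∀ c : Fin 2, ((0 : Fin (n+1)), c) ∉ A := by
    intro c
    rw [hA]
    simp only [Finset.mem_image]
    rintro ⟨p, _, hp⟩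
    exact Fin.succ_ne_zero p.1 (congrArg Prod.fst hp)
  have h01ne : ((0 : Fin (n+1)), (0 : Fin 2)) ≠ ((0 : Fin (n+1)), (1 : Fin 2)) := by
    intro hh; rw [Prod.mk.injEq] at hh; exact absurd hh.2 (by decide)
  have hcard : (insert ((0 : Fin (n+1)), (0 : Fin 2))
      (insert ((0 : Fin (n+1)), (1 : Fin 2)) A)).card = 2 * (freq v 1 + freq v 3) + 2 := by
    rw [Finset.card_insert_of_notMem, Finset.card_insert_of_notMem (hnotA 1)]
    · rw [hA, Finset.card_image_of_injective _ hinj, card_oddCols]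
    · rw [Finset.mem_insert]
      rintro (hh | hh)
      · exact h01ne hh
      · exact hnotA 0 hh
  set ε₀ : Fin (n+1) × Fin 2 → ℤ :=
    fun q => if q = ((0 : Fin (n+1)), (1 : Fin 2)) then -1 else 1 with hε₀def
  have hε₀ : ∀ q, ε₀ q = 1 ∨ ε₀ q = -1 := by
    intro q
    rw [hε₀def]
    by_cases hq : q = ((0 : Fin (n+1)), (1 : Fin 2)) <;> simp [hq]
  obtain ⟨u, hu⟩ := h _ hcard ε₀ hε₀
  have e1 : ε₀ ((0 : Fin (n+1)), (0 : Fin 2)) = 1 := if_neg h01ne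
  have e2 : ε₀ ((0 : Fin (n+1)), (1 : Fin 2)) = -1 := if_pos rfl
  have e3 : ∀ (j : Fin n) (c : Fin 2), ε₀ (j.succ, c) = 1 := fun j c =>
    if_neg (fun hq => Fin.succ_ne_zero j (congrArg Prod.fst hq))
  have g0 := hu ((0 : Fin (n+1)), (0 : Fin 2)) (Finset.mem_insert_self _ _)
  rw [dv0, e1] at g0
  have g1 := hu ((0 : Fin (n+1)), (1 : Fin 2))
    (Finset.mem_insert_of_mem (Finset.mem_insert_self _ _))
  rw [dv0, e2] at g1
  have hw : ∑ i, u i * v i = 1 :=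
    (by decide : ∀ w : ZMod 4, gray w 0 = 1 → gray w 1 = -1 → w = 1) _ g0 g1
  have hodd : ∀ j : Fin n, (v j = 1 ∨ v j = 3) → u j = 0 := by
    intro j hj
    have hmem : ∀ c : Fin 2, (j.succ, c) ∈ insert ((0 : Fin (n+1)), (0 : Fin 2))
        (insert ((0 : Fin (n+1)), (1 : Fin 2)) A) := by
      intro c
      apply Finset.mem_insert_of_mem
      apply Finset.mem_insert_of_mem
      rw [hA]
      exact Finset.mem_image.mpr ⟨(j, c), by
        simp only [Finset.mem_product, Finset.mem_filter]
        exact ⟨⟨Finset.mem_univ _, hj⟩, Finset.mem_univ _⟩, rfl⟩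
    have k0 := hu _ (hmem 0); rw [dvs, e3] at k0
    have k1 := hu _ (hmem 1); rw [dvs, e3] at k1
    exact (by decide : ∀ x : ZMod 4, gray x 0 = 1 → gray x 1 = 1 → x = 0) _ k0 k1
  have hterm : ∀ j, u j * v j = 2 * (if v j = 2 then u j else 0) := by
    intro j
    rcases zmod4_cases (v j) with hv | hv | hv | hv
    · rw [if_neg (by rw [hv]; decide), hv]; ring
    · rw [if_neg (by rw [hv]; decide), hodd j (Or.inl hv)]; ring
    · rw [if_pos hv, hv]; ring
    · rw [if_neg (by rw [hv]; decide), hodd j (Or.inr hv)]; ring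
  have hfin : (1 : ZMod 4) = 2 * ∑ j, (if v j = 2 then u j else 0) := by
    rw [← hw, Finset.mul_sum]
    exact Finset.sum_congr rfl fun j _ => hterm j
  exact absurd hfin.symm ((by decide : ∀ Y : ZMod 4, 2 * Y ≠ 1) _)

lemma gray_pm : ∀ (x : ZMod 4) (c : Fin 2), gray x c = 1 ∨ gray x c = -1 := by decide

lemma gray_inj : ∀ a b : ZMod 4, gray a 0 = gray b 0 → gray a 1 = gray b 1 → a = b := by decide

lemma upper_f20 {n : ℕ} (v : Fin n → ZMod 4) (hf2 : freq v 2 = 0)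
    (hf : 0 < freq v 1 + freq v 3) :
    ¬ hasProjectivity (Dv v) (2 * (freq v 1 + freq v 3)) := by
  intro h
  classical
  have hv0 : ∀ i, ¬(v i = 1 ∨ v i = 3) → v i = 0 := by
    intro i hi
    rcases zmod4_cases (v i) with hv | hv | hv | hv
    · exact hv
    · exact absurd (Or.inl hv) hi
    · exact absurd hv (no_two v hf2 i)
    · exact absurd (Or.inr hv) hi
  by_cases hF1 : freq v 1 + freq v 3 = 1
  · -- exactly one odd coordinate
    have hcard1 : (univ.filter fun i => v i = 1 ∨ v i = 3).card = 1 := by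
      rw [card_oddI]; omega
    obtain ⟨i, hi⟩ := Finset.card_eq_one.mp hcard1
    have hvi : v i = 1 ∨ v i = 3 := by
      have hm : i ∈ univ.filter fun j => v j = 1 ∨ v j = 3 := by
        rw [hi]; exact Finset.mem_singleton_self i
      exact (Finset.mem_filter.mp hm).2
    have hothers : ∀ j, j ≠ i → v j = 0 := by
      intro j hj
      apply hv0
      intro hodd
      have hm : j ∈ univ.filter fun k => v k = 1 ∨ v k = 3 :=
        Finset.mem_filter.mpr ⟨Finset.mem_univ _, hodd⟩
      rw [hi] at hm
      exact hj (Finset.mem_singleton.mp hm)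
    have hne : ((0 : Fin (n+1)), (0 : Fin 2)) ≠ (i.succ, if v i = 1 then (0:Fin 2) else 1) := by
      intro hh; exact Fin.succ_ne_zero i (congrArg Prod.fst hh).symm
    have hcards : ({((0 : Fin (n+1)), (0 : Fin 2)),
        (i.succ, if v i = 1 then (0:Fin 2) else 1)} : Finset _).card
        = 2 * (freq v 1 + freq v 3) := by
      rw [Finset.card_pair hne]; omega
    set ε₀ : Fin (n+1) × Fin 2 → ℤ :=
      fun q => if q = ((0 : Fin (n+1)), (0 : Fin 2)) then -1 else 1 with hd
    obtain ⟨u, hu⟩ := h _ hcards ε₀ (by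
      intro q
      by_cases hq : q = ((0 : Fin (n+1)), (0 : Fin 2))
      · exact Or.inr (if_pos hq)
      · exact Or.inl (if_neg hq))
    have g0 := hu _ (Finset.mem_insert_self _ _)
    rw [dv0] at g0
    have e0 : ε₀ ((0 : Fin (n+1)), (0 : Fin 2)) = -1 := if_pos rfl
    rw [e0] at g0
    have g1 := hu _ (Finset.mem_insert_of_mem (Finset.mem_singleton_self _))
    rw [dvs] at g1
    have e1 : ε₀ (i.succ, if v i = 1 then (0:Fin 2) else 1) = 1 :=
      if_neg (fun hh => Fin.succ_ne_zero i (congrArg Prod.fst hh))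
    rw [e1] at g1
    have hwsum : ∑ j, u j * v j = u i * v i := by
      apply Finset.sum_eq_single
      · intro j _ hj; rw [hothers j hj]; ring
      · intro hmem; exact absurd (Finset.mem_univ i) hmem
    rw [hwsum] at g0
    have key : ∀ x vv : ZMod 4, (vv = 1 ∨ vv = 3) →
        gray (x * vv) 0 = gray x (if vv = 1 then (0:Fin 2) else 1) := by
      intro x vv hv
      rcases hv with rfl | rfl <;> revert x <;> decide
    rw [key (u i) (v i) hvi] at g0
    rw [g1] at g0
    exact absurd g0 (by norm_num)
  · -- at least two odd coordinates
    have h2le : 2 ≤ (univ.filter fun i => v i = 1 ∨ v i = 3).card := by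
      rw [card_oddI]; omega
    obtain ⟨i1, hi1, i2, hi2, hne12⟩ := extract2 h2le
    have hv1 : v i1 = 1 ∨ v i1 = 3 := (Finset.mem_filter.mp hi1).2
    have hv2 : v i2 = 1 ∨ v i2 = 3 := (Finset.mem_filter.mp hi2).2
    have hinj : Function.Injective
        (fun p : Fin n × Fin 2 => ((p.1.succ, p.2) : Fin (n+1) × Fin 2)) := by
      intro p q hpq
      simp only [Prod.mk.injEq] at hpq
      exact Prod.ext (Fin.succ_injective n hpq.1) hpq.2
    set A := ((univ.filter fun i => v i = 1 ∨ v i = 3) ×ˢ (univ : Finset (Fin 2))).image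
        (fun p : Fin n × Fin 2 => ((p.1.succ, p.2) : Fin (n+1) × Fin 2)) with hA
    have hmemA : ∀ (j : Fin n) (c : Fin 2), (v j = 1 ∨ v j = 3) → (j.succ, c) ∈ A := by
      intro j c hj
      rw [hA]
      exact Finset.mem_image.mpr ⟨(j, c), by
        simp only [Finset.mem_product, Finset.mem_filter]
        exact ⟨⟨Finset.mem_univ _, hj⟩, Finset.mem_univ _⟩, rfl⟩
    have hnotA : ∀ c : Fin 2, ((0 : Fin (n+1)), c) ∉ A := by
      intro c
      rw [hA]
      simp only [Finset.mem_image]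
      rintro ⟨p, _, hp⟩
      exact Fin.succ_ne_zero p.1 (congrArg Prod.fst hp)
    set P : Finset (Fin (n+1) × Fin 2) :=
      {(i1.succ, (1 : Fin 2)), (i2.succ, (1 : Fin 2))} with hP
    have hPsub : P ⊆ A := by
      intro q hq
      rw [hP] at hq
      rcases Finset.mem_insert.mp hq with rfl | hq
      · exact hmemA i1 1 hv1
      · rw [Finset.mem_singleton.mp hq]
        exact hmemA i2 1 hv2
    have hPcard : P.card = 2 := by
      rw [hP, Finset.card_pair]
      intro hh
      rw [Prod.mk.injEq] at hh
      exact hne12 (Fin.succ_injective n hh.1)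
    have hAcard : A.card = 2 * (freq v 1 + freq v 3) := by
      rw [hA, Finset.card_image_of_injective _ hinj, card_oddCols]
    have h01ne : ((0 : Fin (n+1)), (0 : Fin 2)) ≠ ((0 : Fin (n+1)), (1 : Fin 2)) := by
      intro hh; rw [Prod.mk.injEq] at hh; exact absurd hh.2 (by decide)
    have hcards : (insert ((0 : Fin (n+1)), (0 : Fin 2))
        (insert ((0 : Fin (n+1)), (1 : Fin 2)) (A \ P))).card
        = 2 * (freq v 1 + freq v 3) := by
      have hd1 : ((0 : Fin (n+1)), (1 : Fin 2)) ∉ A \ P :=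
        fun hh => hnotA 1 (Finset.mem_sdiff.mp hh).1
      have hd0 : ((0 : Fin (n+1)), (0 : Fin 2)) ∉ insert ((0 : Fin (n+1)), (1 : Fin 2)) (A \ P) := by
        rw [Finset.mem_insert]
        rintro (hh | hh)
        · exact h01ne hh
        · exact hnotA 0 (Finset.mem_sdiff.mp hh).1
      rw [Finset.card_insert_of_notMem hd0, Finset.card_insert_of_notMem hd1,
        Finset.card_sdiff_of_subset hPsub, hAcard, hPcard]
      omega
    set m : ZMod 4 := if v i1 = v i2 then -(v i1) else 2 with hm
    set ε₀ : Fin (n+1) × Fin 2 → ℤ := fun q =>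
      if q = ((0 : Fin (n+1)), (0 : Fin 2)) then gray m 0
      else if q = ((0 : Fin (n+1)), (1 : Fin 2)) then gray m 1 else 1 with hd
    have hε₀ : ∀ q, ε₀ q = 1 ∨ ε₀ q = -1 := by
      intro q
      by_cases hq0 : q = ((0 : Fin (n+1)), (0 : Fin 2))
      · have h' : ε₀ q = gray m 0 := if_pos hq0
        rcases gray_pm m 0 with hg | hg
        · exact Or.inl (h'.trans hg)
        · exact Or.inr (h'.trans hg)
      · by_cases hq1 : q = ((0 : Fin (n+1)), (1 : Fin 2))
        · have h' : ε₀ q = gray m 1 := (if_neg hq0).trans (if_pos hq1)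
          rcases gray_pm m 1 with hg | hg
          · exact Or.inl (h'.trans hg)
          · exact Or.inr (h'.trans hg)
        · exact Or.inl ((if_neg hq0).trans (if_neg hq1))
    obtain ⟨u, hu⟩ := h _ hcards ε₀ hε₀
    have e0 : ε₀ ((0 : Fin (n+1)), (0 : Fin 2)) = gray m 0 := if_pos rfl
    have e1 : ε₀ ((0 : Fin (n+1)), (1 : Fin 2)) = gray m 1 :=
      (if_neg h01ne.symm).trans (if_pos rfl)
    have e2 : ∀ (j : Fin n) (c : Fin 2), ε₀ (j.succ, c) = 1 := fun j c =>
      (if_neg (fun hh => Fin.succ_ne_zero j (congrArg Prod.fst hh))).trans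
        (if_neg (fun hh => Fin.succ_ne_zero j (congrArg Prod.fst hh)))
    have g0 := hu _ (Finset.mem_insert_self _ _)
    rw [dv0, e0] at g0
    have g1 := hu _ (Finset.mem_insert_of_mem (Finset.mem_insert_self _ _))
    rw [dv0, e1] at g1
    have hw : ∑ i, u i * v i = m := gray_inj _ _ g0 g1
    have hmemB : ∀ (j : Fin n) (c : Fin 2), (v j = 1 ∨ v j = 3) →
        (j.succ, c) ∉ P → (j.succ, c) ∈ insert ((0 : Fin (n+1)), (0 : Fin 2))
          (insert ((0 : Fin (n+1)), (1 : Fin 2)) (A \ P)) := by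
      intro j c hj hnp
      exact Finset.mem_insert_of_mem (Finset.mem_insert_of_mem
        (Finset.mem_sdiff.mpr ⟨hmemA j c hj, hnp⟩))
    have hnotP : ∀ (j : Fin n) (c : Fin 2), (j ≠ i1 ∨ c ≠ 1) → (j ≠ i2 ∨ c ≠ 1) →
        (j.succ, c) ∉ P := by
      intro j c hj1 hj2 hp
      rw [hP] at hp
      rcases Finset.mem_insert.mp hp with hh | hh
      · rw [Prod.mk.injEq] at hh
        rcases hj1 with hj1 | hj1
        · exact hj1 (Fin.succ_injective n hh.1)
        · exact hj1 hh.2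
      · rw [Finset.mem_singleton, Prod.mk.injEq] at hh
        rcases hj2 with hj2 | hj2
        · exact hj2 (Fin.succ_injective n hh.1)
        · exact hj2 hh.2
    have huodd : ∀ j : Fin n, (v j = 1 ∨ v j = 3) → j ≠ i1 → j ≠ i2 → u j = 0 := by
      intro j hj hj1 hj2
      have k0 := hu _ (hmemB j 0 hj (hnotP j 0 (Or.inl hj1) (Or.inl hj2)))
      rw [dvs, e2] at k0
      have k1 := hu _ (hmemB j 1 hj (hnotP j 1 (Or.inl hj1) (Or.inl hj2)))
      rw [dvs, e2] at k1
      exact (by decide : ∀ x : ZMod 4, gray x 0 = 1 → gray x 1 = 1 → x = 0) _ k0 k1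
    have hu1 : u i1 = 0 ∨ u i1 = 1 := by
      have k0 := hu _ (hmemB i1 0 hv1 (hnotP i1 0 (Or.inr (by decide)) (Or.inr (by decide))))
      rw [dvs, e2] at k0
      exact (by decide : ∀ x : ZMod 4, gray x 0 = 1 → x = 0 ∨ x = 1) _ k0
    have hu2 : u i2 = 0 ∨ u i2 = 1 := by
      have k0 := hu _ (hmemB i2 0 hv2 (hnotP i2 0 (Or.inr (by decide)) (Or.inr (by decide))))
      rw [dvs, e2] at k0
      exact (by decide : ∀ x : ZMod 4, gray x 0 = 1 → x = 0 ∨ x = 1) _ k0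
    have hwsum : ∑ j, u j * v j = u i1 * v i1 + u i2 * v i2 := by
      have hpair : ∑ j ∈ ({i1, i2} : Finset (Fin n)), u j * v j
          = u i1 * v i1 + u i2 * v i2 := Finset.sum_pair hne12
      rw [← hpair]
      apply (Finset.sum_subset (Finset.subset_univ _) _).symm
      intro j _ hj
      rw [Finset.mem_insert, Finset.mem_singleton] at hj
      push_neg at hj
      by_cases hodd : v j = 1 ∨ v j = 3
      · rw [huodd j hodd hj.1 hj.2]; ring
      · rw [hv0 j hodd]; ring
    rw [hwsum] at hw
    rw [hm] at hw
    exact (by decide : ∀ x1 x2 d1 d2 : ZMod 4, (x1 = 0 ∨ x1 = 1) → (x2 = 0 ∨ x2 = 1) →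
      (d1 = 1 ∨ d1 = 3) → (d2 = 1 ∨ d2 = 3) →
      x1 * d1 + x2 * d2 ≠ (if d1 = d2 then -d1 else 2)) _ _ _ _ hu1 hu2 hv1 hv2 hw

lemma proj_f2pos {n : ℕ} (v : Fin n → ZMod 4) (hf2 : 0 < freq v 2) :
    hasProjectivity (Dv v) (2 * (freq v 1 + freq v 3) + 1) := by
  intro s hs ε hε
  apply lower v s ε hε
  · intro h00 h01
    have c1 := count_FO v s
    have c2 := count_FOF2 v s
    have c3 := count_split s
    have c4 := count_both s h00 h01
    by_cases hF2 : 1 ≤ (freeTwo v s).card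
    · exact Or.inl ⟨by omega, hF2⟩
    · exact Or.inr (by omega)
  · intro hone
    have c1 := count_FO v s
    have c2 := count_FOF2 v s
    have c3 := count_split s
    have c4 : 1 ≤ (s.filter fun q => q.1 = 0).card := by
      rcases hone with hone | hone
      · exact count_one s hone
      · exact count_one s hone
    by_cases hF2 : 1 ≤ (freeTwo v s).card
    · exact Or.inr hF2
    · exact Or.inl (by omega)

lemma proj_f20 {n : ℕ} (v : Fin n → ZMod 4) (hf2 : freq v 2 = 0)
    (hf : 0 < freq v 1 + freq v 3) :
    hasProjectivity (Dv v) (2 * (freq v 1 + freq v 3) - 1) := by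
  intro s hs ε hε
  apply lower v s ε hε
  · intro h00 h01
    have c1 := count_FO v s
    have c3 := count_split s
    have c4 := count_both s h00 h01
    have c5 := count_s0_le s
    exact Or.inr (by omega)
  · intro hone
    have c1 := count_FO v s
    have c3 := count_split s
    have c4 : 1 ≤ (s.filter fun q => q.1 = 0).card := by
      rcases hone with hone | hone
      · exact count_one s hone
      · exact count_one s hone
    have c5 := count_s0_le s
    exact Or.inl (by omega)


/-- Theorem 2: if `f₂ > 0` the projectivity of `D` is exactly
`2(f₁+f₃) + 1`; if `f₂ = 0` and `f₁ + f₃ > 0` it is exactly `2(f₁+f₃) − 1`. -/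
theorem statement8 (n : ℕ) (v : Fin n → ZMod 4)
    (f1 f2 f3 : ℕ) (h1 : f1 = freq v 1) (h2 : f2 = freq v 2) (h3 : f3 = freq v 3) :
    (0 < f2 →
      hasProjectivity (Dv v) (2 * (f1 + f3) + 1) ∧
      ¬ hasProjectivity (Dv v) (2 * (f1 + f3) + 2)) ∧
    (f2 = 0 → 0 < f1 + f3 →
      hasProjectivity (Dv v) (2 * (f1 + f3) - 1) ∧
      ¬ hasProjectivity (Dv v) (2 * (f1 + f3))) := by
  subst h1 h2 h3
  constructor
  · intro hf2
    exact ⟨proj_f2pos v hf2, upper_f2 v⟩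
  · intro hf2 hf
    exact ⟨proj_f20 v hf2 hf, upper_f20 v hf2 hf⟩
end
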